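/- arXiv:2201.01245 — 12 statements merged into one kernel-verified Lean document; each statement's English description precedes it below -/
import Mathlib

section
/- Let α be an algebraic number with 0 < α < 1 such that the additive monoid N₀[α] is atomic (with set of atoms {αⁿ : n ∈ ℕ₀}). Then for every k ∈ ℕ₀ and every n ∈ ℕ₀, there exists β ∈ ⟨αʲ : j ≥ k+n⟩ such that αᵏ divides β in N₀[α]. -/
/-!
A nonzero algebraic `α` satisfies a relation `1 + q(α) = p(α)` with `p, q ∈ ℕ₀[X]` and `X ∣ p`
(split an integer relation with nonzero constant term by the signs of its coefficients).
Such relations are closed under multiplication, so there is one with `Xⁿ ∣ p`; multiplying it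
by `αᵏ` exhibits `β = αᵏ p(α)` as `αᵏ + αᵏ q(α)`.
-/

/-- `N₀[α]`: the additive submonoid of ℝ generated by the powers of `α`. -/
def Nmon (α : ℝ) : AddSubmonoid ℝ := AddSubmonoid.closure (Set.range fun n : ℕ => α ^ n)

/-- `a` is an atom of the submonoid `M`. -/
def IsAtomOf (M : AddSubmonoid ℝ) (a : ℝ) : Prop :=
  a ∈ M ∧ a ≠ 0 ∧ ∀ b c : ℝ, b ∈ M → c ∈ M → a = b + c → b = 0 ∨ c = 0

/-- `M` is atomic: every nonzero element is a sum of atoms. -/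
def IsAtomicM (M : AddSubmonoid ℝ) : Prop :=
  ∀ x ∈ M, x ≠ 0 → ∃ S : Multiset ℝ, (∀ a ∈ S, IsAtomOf M a) ∧ S.sum = x

open Polynomial

section PowTail

variable {A : Type*} [CommSemiring A] (α : A)

def powTail (m : ℕ) : AddSubmonoid A :=
  AddSubmonoid.closure {x | ∃ j : ℕ, m ≤ j ∧ x = α ^ j}

theorem pow_mem_powTail {m j : ℕ} (hj : m ≤ j) : α ^ j ∈ powTail α m :=
  AddSubmonoid.subset_closure ⟨j, hj, rfl⟩

theorem pow_mul_aeval_mem_powTail (p : ℕ[X]) (m : ℕ) : α ^ m * aeval α p ∈ powTail α m := by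
  induction p using Polynomial.induction_on' with
  | add p q hp hq => rw [map_add, mul_add]; exact add_mem hp hq
  | monomial j c =>
    have : α ^ m * aeval α (monomial j c) = c • α ^ (m + j) := by
      rw [aeval_monomial, nsmul_eq_mul, pow_add, eq_natCast]; ring
    rw [this]
    exact AddSubmonoid.nsmul_mem _ (pow_mem_powTail α (Nat.le_add_right m j)) c

theorem pow_mul_aeval_mem_powTail_of_X_pow_dvd {p : ℕ[X]} {r : ℕ} (hp : X ^ r ∣ p) (m : ℕ) :
    α ^ m * aeval α p ∈ powTail α (m + r) := by
  obtain ⟨p', rfl⟩ := hp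
  rw [map_mul, aeval_X_pow, ← mul_assoc, ← pow_add]
  exact pow_mul_aeval_mem_powTail α p' (m + r)

theorem exists_X_pow_dvd_one_add_aeval_eq_aeval {α : A} {p₁ q₁ : ℕ[X]} (hX : X ∣ p₁)
    (h : 1 + aeval α q₁ = aeval α p₁) (n : ℕ) :
    ∃ p q : ℕ[X], X ^ n ∣ p ∧ 1 + aeval α q = aeval α p := by
  induction n with
  | zero => exact ⟨1, 0, by simp, by simp⟩
  | succ n ih =>
    obtain ⟨p, q, hp, hpq⟩ := ih
    refine ⟨p * p₁, q + q₁ + q * q₁, pow_succ (X : ℕ[X]) n ▸ mul_dvd_mul hp hX, ?_⟩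
    rw [map_mul, ← hpq, ← h]
    simp only [map_add, map_mul]
    ring

end PowTail

theorem powTail_le_Nmon (α : ℝ) (m : ℕ) : powTail α m ≤ Nmon α :=
  AddSubmonoid.closure_mono fun _ ⟨j, _, hx⟩ => ⟨j, hx.symm⟩

theorem Polynomial.exists_aeval_eq_aeval_sub_aeval_natPoly {A : Type*} [CommRing A] (α : A)
    (g : ℤ[X]) : ∃ P N : ℕ[X], aeval α g = aeval α P - aeval α N := by
  induction g using Polynomial.induction_on' with
  | add g h hg hh =>
    obtain ⟨P, N, hPN⟩ := hg
    obtain ⟨P', N', hPN'⟩ := hh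
    exact ⟨P + P', N + N', by simp only [map_add, hPN, hPN']; ring⟩
  | monomial j c =>
    refine ⟨monomial j c.toNat, monomial j (-c).toNat, ?_⟩
    simp only [aeval_monomial, eq_intCast, eq_natCast, ← sub_mul]
    rw [← Int.cast_natCast, ← Int.cast_natCast (-c).toNat, ← Int.cast_sub, Int.toNat_sub_toNat_neg]

theorem exists_X_dvd_one_add_aeval_eq_aeval {K : Type*} [Field K] [CharZero K] {α : K}
    (halg : IsAlgebraic ℚ α) (hα : α ≠ 0) :
    ∃ p q : ℕ[X], X ∣ p ∧ 1 + aeval α q = aeval α p := by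
  obtain ⟨g, hg0, hg⟩ := IsAlgebraic.exists_nonzero_coeff_and_aeval_eq_zero
    ((IsFractionRing.isAlgebraic_iff ℤ ℚ K).mpr halg) (mem_nonZeroDivisors_of_ne_zero hα)
  wlog hpos : 0 < g.coeff 0 generalizing g
  · exact this (-g) (by simpa using hg0) (by simpa using hg) (by rw [coeff_neg]; omega)
  obtain ⟨P, N, hPN⟩ := exists_aeval_eq_aeval_sub_aeval_natPoly α g.divX
  have hc : ((g.coeff 0 - 1).toNat : K) = g.coeff 0 - 1 := by
    exact_mod_cast Int.toNat_of_nonneg (by omega)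
  have hsplit : α * aeval α g.divX + g.coeff 0 = 0 := by
    simpa using congrArg (aeval α) (X_mul_divX_add g) |>.trans hg
  refine ⟨X * N, ((g.coeff 0 - 1).toNat : ℕ[X]) + X * P, dvd_mul_right _ _, ?_⟩
  simp only [map_add, map_mul, aeval_X, map_natCast, hc]
  linear_combination hsplit - α * hPN

theorem stmt1_general (α : ℝ) (halg : IsAlgebraic ℚ α) (h0 : 0 < α) (k n : ℕ) :
    ∃ β ∈ AddSubmonoid.closure {x : ℝ | ∃ j : ℕ, k + n ≤ j ∧ x = α ^ j},
      ∃ γ ∈ Nmon α, β = α ^ k + γ := by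
  obtain ⟨p₁, q₁, hX, h⟩ := exists_X_dvd_one_add_aeval_eq_aeval halg h0.ne'
  obtain ⟨p, q, hp, hpq⟩ := exists_X_pow_dvd_one_add_aeval_eq_aeval hX h n
  refine ⟨α ^ k * aeval α p, pow_mul_aeval_mem_powTail_of_X_pow_dvd α hp k,
    α ^ k * aeval α q, powTail_le_Nmon α k (pow_mul_aeval_mem_powTail α q k), ?_⟩
  rw [← hpq]
  ring

/-- For an algebraic `α` with `0 < α < 1` and `N₀[α]` atomic, for every `k` and `n`
there is `β` in the submonoid generated by `{α^j : j ≥ k + n}` with `α^k ∣ β` in `N₀[α]`. -/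
theorem stmt1 (α : ℝ) (halg : IsAlgebraic ℚ α) (h0 : 0 < α) (h1 : α < 1)
    (hat : IsAtomicM (Nmon α)) (k n : ℕ) :
    ∃ β ∈ AddSubmonoid.closure {x : ℝ | ∃ j : ℕ, k + n ≤ j ∧ x = α ^ j},
      ∃ γ ∈ Nmon α, β = α ^ k + γ :=
  stmt1_general α halg h0 k n
end

section
/- Let α be an algebraic number with 0 < α < 1 such that the additive monoid N₀[α] is atomic. Then every atom of N₀[α] has infinite omega-primality; that is, N₀[α] is an anti-prime monoid. -/
/-- Divisibility in the submonoid `M`. -/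
def DvdM (M : AddSubmonoid ℝ) (x y : ℝ) : Prop := ∃ z ∈ M, y = x + z

open Polynomial

section Subsemiring

variable {S : Subsemiring ℝ} {c x y x' y' : ℝ}

theorem not_dvdM_of_card_mul_lt {M : AddSubmonoid ℝ} (hM : ∀ z ∈ M, 0 ≤ z) {T : Multiset ℝ}
    {a b : ℝ} (hT : ∀ t ∈ T, t ≤ b) (hlt : Multiset.card T * b < a) : ¬ DvdM M a T.sum := by
  rintro ⟨z, hz, hsum⟩
  have := Multiset.sum_le_card_nsmul T b hT
  rw [nsmul_eq_mul] at this
  linarith [hM z hz]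

theorem DvdM.mul_left (hc : c ∈ S) (h : DvdM S.toAddSubmonoid x y) :
    DvdM S.toAddSubmonoid (c * x) (c * y) := by
  obtain ⟨z, hz, rfl⟩ := h
  exact ⟨c * z, S.mul_mem hc hz, mul_add c x z⟩

theorem DvdM.mul (hx : x ∈ S) (hx' : x' ∈ S) (h : DvdM S.toAddSubmonoid x y)
    (h' : DvdM S.toAddSubmonoid x' y') : DvdM S.toAddSubmonoid (x * x') (y * y') := by
  obtain ⟨z, hz, rfl⟩ := h
  obtain ⟨z', hz', rfl⟩ := h'
  refine ⟨x * z' + z * x' + z * z', ?_, by ring⟩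
  exact S.add_mem (S.add_mem (S.mul_mem hx hz') (S.mul_mem hz hx')) (S.mul_mem hz hz')

theorem DvdM.pow (hx : x ∈ S) (h : DvdM S.toAddSubmonoid x y) (k : ℕ) :
    DvdM S.toAddSubmonoid (x ^ k) (y ^ k) := by
  induction k with
  | zero => exact ⟨0, S.zero_mem, by simp⟩
  | succ k ih =>
    rw [pow_succ, pow_succ]
    exact ih.mul (S.pow_mem hx k) hx h

theorem dvdM_one_natCast_add {M : AddSubmonoid ℝ} (h1 : (1 : ℝ) ∈ M) {k : ℕ} (hk : k ≠ 0)
    (hx : x ∈ M) : DvdM M 1 (k + x) := by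
  refine ⟨(k - 1) • 1 + x, M.add_mem (M.nsmul_mem h1 _) hx, ?_⟩
  rw [nsmul_one, Nat.cast_pred (Nat.pos_of_ne_zero hk)]
  ring

theorem IsAtomOf.of_mul (h : IsAtomOf S.toAddSubmonoid (c * x)) (hc : c ∈ S) (hx : x ∈ S)
    (hx0 : x ≠ 0) : IsAtomOf S.toAddSubmonoid x := by
  refine ⟨hx, hx0, fun b d hb hd hbd => ?_⟩
  have hc0 : c ≠ 0 := left_ne_zero_of_mul h.2.1
  simpa [hc0] using h.2.2 (c * b) (c * d) (S.mul_mem hc hb) (S.mul_mem hc hd) (by rw [hbd, mul_add])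

end Subsemiring

namespace Nmon

variable {α x y : ℝ}

theorem pow_mem (n : ℕ) : α ^ n ∈ Nmon α :=
  AddSubmonoid.subset_closure ⟨n, rfl⟩

-- `Nmon α` is definitionally `(Submonoid.powers α).subsemiringClosure.toAddSubmonoid`, so the
-- lemmas above apply to it with `S := (Submonoid.powers α).subsemiringClosure`.
theorem mul_mem (hx : x ∈ Nmon α) (hy : y ∈ Nmon α) : x * y ∈ Nmon α :=
  (Submonoid.powers α).subsemiringClosure.mul_mem hx hy

theorem one_mem : (1 : ℝ) ∈ Nmon α := by
  simpa using pow_mem (α := α) 0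

theorem mem_iff : x ∈ Nmon α ↔ ∃ l : Multiset ℕ, (l.map (α ^ ·)).sum = x := by
  refine ⟨fun hx => ?_, ?_⟩
  · induction hx using AddSubmonoid.closure_induction with
    | mem x hx =>
      obtain ⟨n, rfl⟩ := hx
      exact ⟨{n}, by simp⟩
    | zero => exact ⟨0, by simp⟩
    | add x y _ _ hx hy =>
      obtain ⟨l₁, rfl⟩ := hx
      obtain ⟨l₂, rfl⟩ := hy
      exact ⟨l₁ + l₂, by simp⟩
  · rintro ⟨l, rfl⟩
    exact AddSubmonoid.multiset_sum_mem _ _ (by simp [pow_mem])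

theorem nonneg (h0 : 0 ≤ α) (hx : x ∈ Nmon α) : 0 ≤ x := by
  obtain ⟨l, rfl⟩ := mem_iff.1 hx
  exact Multiset.sum_nonneg (by simp [pow_nonneg h0])

theorem eq_pow_of_isAtomOf (hα : α ≠ 0) {a : ℝ} (ha : IsAtomOf (Nmon α) a) : ∃ s : ℕ, a = α ^ s := by
  obtain ⟨l, rfl⟩ := mem_iff.1 ha.1
  rcases l.empty_or_exists_mem with rfl | ⟨s, hs⟩
  · exact absurd (by simp) ha.2.1
  obtain ⟨l, rfl⟩ := Multiset.exists_cons_of_mem hs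
  rw [Multiset.map_cons, Multiset.sum_cons] at ha ⊢
  rcases ha.2.2 _ _ (pow_mem s) (mem_iff.2 ⟨l, rfl⟩) rfl with h | h
  · exact absurd h (pow_ne_zero s hα)
  · exact ⟨s, by rw [h, add_zero]⟩

theorem isAtomOf_pow (h0 : 0 < α) (h1 : α < 1) (hat : IsAtomicM (Nmon α)) (k : ℕ) :
    IsAtomOf (Nmon α) (α ^ k) := by
  obtain ⟨T, hT, hsum⟩ := hat _ (pow_mem k) (pow_ne_zero k h0.ne')
  obtain ⟨a, ha⟩ : ∃ a, a ∈ T := Multiset.exists_mem_of_ne_zero <| by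
    rintro rfl
    exact pow_ne_zero k h0.ne' (by simpa using hsum.symm)
  obtain ⟨e, rfl⟩ := eq_pow_of_isAtomOf h0.ne' (hT a ha)
  have hke : k ≤ e := by
    rw [← pow_le_pow_iff_right_of_lt_one₀ h0 h1, ← hsum]
    exact Multiset.single_le_sum (fun b hb => nonneg h0.le (hT b hb).1) _ ha
  have hsplit := hT _ ha
  rw [← pow_sub_mul_pow α hke] at hsplit
  exact IsAtomOf.of_mul (S := (Submonoid.powers α).subsemiringClosure) hsplit (pow_mem _)
    (pow_mem k) (pow_ne_zero k h0.ne')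

theorem exists_sub_eq_aeval (p : ℤ[X]) : ∃ A ∈ Nmon α, ∃ B ∈ Nmon α, aeval α p = A - B := by
  induction p using Polynomial.induction_on' with
  | add p q hp hq =>
    obtain ⟨A, hA, B, hB, hp⟩ := hp
    obtain ⟨A', hA', B', hB', hq⟩ := hq
    exact ⟨A + A', add_mem hA hA', B + B', add_mem hB hB', by rw [map_add, hp, hq]; ring⟩
  | monomial n a =>
    have hmem (k : ℕ) : (k : ℝ) * α ^ n ∈ Nmon α := by
      rw [← nsmul_eq_mul]
      exact nsmul_mem (pow_mem n) k
    obtain ⟨k, rfl | rfl⟩ := Int.eq_nat_or_neg a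
    · exact ⟨_, hmem k, 0, zero_mem _, by simp⟩
    · exact ⟨0, zero_mem _, _, hmem k, by simp⟩

theorem exists_dvdM_one_mul (halg : IsAlgebraic ℤ α) (hα : α ≠ 0) :
    ∃ y ∈ Nmon α, DvdM (Nmon α) 1 (α * y) := by
  obtain ⟨p, hp, hpα⟩ := halg
  obtain ⟨q, hpq, hq⟩ := exists_eq_pow_rootMultiplicity_mul_and_not_dvd p hp 0
  simp only [map_zero, sub_zero, X_dvd_iff] at hpq hq
  have hqα : aeval α q = 0 := by
    rw [hpq, map_mul, map_pow, aeval_X] at hpα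
    exact (mul_eq_zero.1 hpα).resolve_left (pow_ne_zero _ hα)
  obtain ⟨A, hA, B, hB, hAB⟩ := exists_sub_eq_aeval (α := α) q.divX
  have hrel : α * (A - B) + q.coeff 0 = 0 := by
    rw [← hAB, ← hqα]
    conv_rhs => rw [← X_mul_divX_add q]
    simp
  have of_eq (A B : ℝ) (hA : A ∈ Nmon α) (hB : B ∈ Nmon α) (k : ℕ) (hk : (k : ℤ) ≠ 0)
      (h : α * B = k + α * A) : ∃ y ∈ Nmon α, DvdM (Nmon α) 1 (α * y) :=
    ⟨B, hB, h ▸ dvdM_one_natCast_add one_mem (by exact_mod_cast hk)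
      (mul_mem (by simpa using pow_mem (α := α) 1) hA)⟩
  obtain ⟨k, hk | hk⟩ := Int.eq_nat_or_neg (q.coeff 0)
  · refine of_eq A B hA hB k (hk ▸ hq) ?_
    rw [hk] at hrel
    push_cast at hrel
    linarith
  · refine of_eq B A hB hA k (by simpa [hk] using hq) ?_
    rw [hk] at hrel
    push_cast at hrel
    linarith

theorem exists_dvdM_one_pow_mul (halg : IsAlgebraic ℤ α) (hα : α ≠ 0) (k : ℕ) :
    ∃ y ∈ Nmon α, DvdM (Nmon α) 1 (α ^ k * y) := by
  obtain ⟨y, hy, h⟩ := exists_dvdM_one_mul halg hα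
  refine ⟨y ^ k, (Submonoid.powers α).subsemiringClosure.pow_mem hy k, ?_⟩
  have : DvdM (Nmon α) (1 ^ k) ((α * y) ^ k) :=
    h.pow (S := (Submonoid.powers α).subsemiringClosure) one_mem k
  rwa [one_pow, mul_pow] at this

end Nmon

/-- For an algebraic `α` with `0 < α < 1` and `N₀[α]` atomic, every atom of `N₀[α]` has
infinite omega-primality: for every `n` there is a (multiset) sum of atoms divisible by the
atom such that no subsum of at most `n` of them is divisible by it. -/
theorem stmt2 (α : ℝ) (halg : IsAlgebraic ℚ α) (h0 : 0 < α) (h1 : α < 1)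
    (hat : IsAtomicM (Nmon α)) :
    ∀ a : ℝ, IsAtomOf (Nmon α) a → ∀ n : ℕ,
      ∃ T : Multiset ℝ, (∀ b ∈ T, IsAtomOf (Nmon α) b) ∧ DvdM (Nmon α) a T.sum ∧
        ∀ S ≤ T, Multiset.card S ≤ n → ¬ DvdM (Nmon α) a S.sum := by
  intro a ha n
  obtain ⟨s, rfl⟩ := Nmon.eq_pow_of_isAtomOf h0.ne' ha
  obtain ⟨m, hm⟩ := exists_pow_lt_of_lt_one (by positivity : 0 < α ^ s / (n + 1)) h1
  have halgℤ : IsAlgebraic ℤ α := (IsFractionRing.isAlgebraic_iff ℤ ℚ ℝ).2 halg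
  obtain ⟨y, hy, hdvd⟩ := Nmon.exists_dvdM_one_pow_mul halgℤ h0.ne' m
  obtain ⟨l, rfl⟩ := Nmon.mem_iff.1 hy
  refine ⟨l.map fun i => α ^ (s + m + i), ?_, ?_, fun S hS hcard => ?_⟩
  · simp only [Multiset.mem_map]
    rintro _ ⟨i, -, rfl⟩
    exact Nmon.isAtomOf_pow h0 h1 hat _
  · have : DvdM (Nmon α) (α ^ s * 1) (α ^ s * (α ^ m * (l.map (α ^ ·)).sum)) :=
      hdvd.mul_left (S := (Submonoid.powers α).subsemiringClosure) (Nmon.pow_mem s)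
    simpa [← Multiset.sum_map_mul_left, ← pow_add, add_assoc] using this
  · refine not_dvdM_of_card_mul_lt (fun _ => Nmon.nonneg h0.le) (b := α ^ m) ?_ ?_
    · intro b hb
      obtain ⟨i, -, rfl⟩ := Multiset.mem_map.1 (Multiset.mem_of_le hS hb)
      exact pow_le_pow_of_le_one h0.le h1.le (by omega)
    · rw [lt_div_iff₀ (by positivity)] at hm
      calc (Multiset.card S : ℝ) * α ^ m ≤ n * α ^ m := by gcongr
        _ < α ^ s := by linarith [pow_pos h0 m]
end

section
/- Let α be an algebraic number with 0 < α < 1 such that N₀[α] is atomic. Then the omega-primality of the monoid N₀[α] is infinite. -/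
/-! Since `α` is a nonzero algebraic number, clearing the powers of `X` from a polynomial it
annihilates and splitting the coefficients by sign gives `1 + y = α * w` with `y, w ∈ N₀[α]`.
Raising to the `r`-th power, `1 + z = α ^ r * w ^ r` for some `z ∈ N₀[α]`, so every atom `a`
divides `α ^ r * (a * w ^ r)`, which is a sum of atoms each at most `α ^ r`. A subsum of at most
`n` of these atoms is at most `n * α ^ r`, which is smaller than `a` once `r` is large, so no
such subsum is divisible by `a`. -/

open Polynomial

lemma exists_one_add_pow_eq {R : Type*} [CommSemiring R] {S : Subsemiring R} {y : R}
    (hy : y ∈ S) (r : ℕ) : ∃ z ∈ S, (1 + y) ^ r = 1 + z := by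
  induction r with
  | zero => exact ⟨0, zero_mem S, by simp⟩
  | succ r ih =>
    obtain ⟨z, hz, hpow⟩ := ih
    exact ⟨y + z + z * y, add_mem (add_mem hy hz) (mul_mem hz hy), by rw [pow_succ, hpow]; ring⟩

section Relation

variable {A : Type*} [CommRing A]

lemma IsAlgebraic.exists_aeval_eq_zero_coeff_zero_ne_zero {R : Type*} [CommRing R]
    [Algebra R A] [NoZeroDivisors A] {α : A} (halg : IsAlgebraic R α) (hα : α ≠ 0) :
    ∃ q : R[X], aeval α q = 0 ∧ q.coeff 0 ≠ 0 := by
  obtain ⟨p, hp, hpα⟩ := halg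
  obtain ⟨q, hpq, hXq⟩ := p.exists_eq_pow_rootMultiplicity_mul_and_not_dvd hp 0
  refine ⟨q, ?_, by simpa [X_dvd_iff] using hXq⟩
  rw [hpq, map_zero, sub_zero, map_mul, map_pow, aeval_X] at hpα
  exact (mul_eq_zero.1 hpα).resolve_left (pow_ne_zero _ hα)

lemma exists_aeval_eq_sub (α : A) (f : ℤ[X]) :
    ∃ u ∈ Subsemiring.closure {α}, ∃ v ∈ Subsemiring.closure {α}, aeval α f = u - v := by
  induction f using Polynomial.induction_on' with
  | add f g hf hg =>
    obtain ⟨u, hu, v, hv, hfuv⟩ := hf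
    obtain ⟨u', hu', v', hv', hguv⟩ := hg
    exact ⟨u + u', add_mem hu hu', v + v', add_mem hv hv', by rw [map_add, hfuv, hguv]; ring⟩
  | monomial n k =>
    have hαn : α ^ n ∈ Subsemiring.closure {α} := 
      pow_mem (Subsemiring.subset_closure (Set.mem_singleton α)) n
    refine ⟨k.toNat * α ^ n, mul_mem (natCast_mem _ _) hαn,
      (-k).toNat * α ^ n, mul_mem (natCast_mem _ _) hαn, ?_⟩
    have hk : ((k.toNat : ℤ) : A) - ((-k).toNat : ℤ) = k := by
      rw [← Int.cast_sub, Int.toNat_sub_toNat_neg]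
    rw [aeval_monomial, algebraMap_int_eq, eq_intCast, ← sub_mul, ← hk]
    push_cast
    ring

lemma exists_natCast_add_mul_eq_mul {α : A} {q : ℤ[X]} (hqα : aeval α q = 0)
    (hq0 : q.coeff 0 ≠ 0) : ∃ c : ℕ, 0 < c ∧
      ∃ y ∈ Subsemiring.closure {α}, ∃ w ∈ Subsemiring.closure {α}, (c : A) + α * y = α * w := by
  obtain ⟨u, hu, v, hv, huv⟩ := exists_aeval_eq_sub α q.divX
  have hrel : (q.coeff 0 : A) + α * (u - v) = 0 := by
    rw [← huv, ← hqα]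
    conv_rhs => rw [← X_mul_divX_add q]
    rw [map_add, map_mul, aeval_X, aeval_C, algebraMap_int_eq, eq_intCast]
    ring
  obtain ⟨c, hc, hcoeff⟩ : ∃ c : ℕ, 0 < c ∧ (q.coeff 0 = c ∨ q.coeff 0 = -c) :=
    ⟨_, Int.natAbs_pos.2 hq0, Int.natAbs_eq _⟩
  rcases hcoeff with hcoeff | hcoeff <;> rw [hcoeff] at hrel <;> push_cast at hrel
  · exact ⟨c, hc, u, hu, v, hv, by linear_combination hrel⟩
  · exact ⟨c, hc, v, hv, u, hu, by linear_combination -hrel⟩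

lemma exists_one_add_eq_mul [NoZeroDivisors A] {α : A} (halg : IsAlgebraic ℤ α) (hα : α ≠ 0) :
    ∃ y ∈ Subsemiring.closure {α}, ∃ w ∈ Subsemiring.closure {α}, 1 + y = α * w := by
  obtain ⟨q, hqα, hq0⟩ := halg.exists_aeval_eq_zero_coeff_zero_ne_zero hα
  obtain ⟨c, hc, y, hy, w, hw, hcyw⟩ := exists_natCast_add_mul_eq_mul hqα hq0
  refine ⟨(c - 1 : ℕ) + α * y,
    add_mem (natCast_mem _ _) 
      (mul_mem (Subsemiring.subset_closure (Set.mem_singleton α)) hy), w, hw, ?_⟩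
  rw [← hcyw, ← add_assoc, Nat.cast_sub hc, Nat.cast_one, add_sub_cancel]

end Relation

lemma mem_Nmon_iff {α x : ℝ} : x ∈ Nmon α ↔ x ∈ Subsemiring.closure {α} := by
  rw [Subsemiring.mem_closure_iff, ← Submonoid.powers_eq_closure, Submonoid.coe_powers, Nmon]

lemma nonneg_of_mem_Nmon {α x : ℝ} (h0 : 0 ≤ α) (hx : x ∈ Nmon α) : 0 ≤ x :=
  AddSubmonoid.closure_le (S := AddSubmonoid.nonneg ℝ)
    |>.2 (by rintro _ ⟨n, rfl⟩; exact pow_nonneg h0 n) hx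

lemma DvdM.le_of_Nmon {α x y : ℝ} (h0 : 0 ≤ α) (h : DvdM (Nmon α) x y) : x ≤ y := by
  obtain ⟨z, hz, rfl⟩ := h
  linarith [nonneg_of_mem_Nmon h0 hz]

lemma IsAtomicM.exists_multiset {M : AddSubmonoid ℝ} (hat : IsAtomicM M) {x : ℝ}
    (hx : x ∈ M) : ∃ S : Multiset ℝ, (∀ a ∈ S, IsAtomOf M a) ∧ S.sum = x := by
  rcases eq_or_ne x 0 with rfl | hx0
  · exact ⟨0, by simp, by simp⟩
  · exact hat x hx hx0

lemma IsAtomicM.exists_atom {M : AddSubmonoid ℝ} (hat : IsAtomicM M) (h1 : (1 : ℝ) ∈ M) :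
    ∃ a, IsAtomOf M a := by
  obtain ⟨S, hS, hsum⟩ := hat 1 h1 one_ne_zero
  obtain ⟨a, ha⟩ := Multiset.exists_mem_of_ne_zero (s := S) (by rintro rfl; simp at hsum)
  exact ⟨a, hS a ha⟩

lemma IsAtomicM.exists_atoms_le_pow_sum_eq {α : ℝ} (h0 : 0 ≤ α) (h1 : α ≤ 1)
    (hat : IsAtomicM (Nmon α)) (k : ℕ) {y : ℝ} (hy : y ∈ Nmon α) :
    ∃ T : Multiset ℝ, (∀ b ∈ T, IsAtomOf (Nmon α) b ∧ b ≤ α ^ k) ∧ T.sum = α ^ k * y := by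
  induction hy using AddSubmonoid.closure_induction with
  | mem _ hy =>
    obtain ⟨t, rfl⟩ := hy
    obtain ⟨T, hT, hsum⟩ :=
      hat.exists_multiset (x := α ^ (k + t)) (AddSubmonoid.subset_closure ⟨_, rfl⟩)
    refine ⟨T, fun b hb => ⟨hT b hb, ?_⟩, by rw [hsum, pow_add]⟩
    calc b ≤ T.sum :=
          Multiset.single_le_sum (fun a ha => nonneg_of_mem_Nmon h0 (hT a ha).1) b hb
      _ = α ^ (k + t) := hsum
      _ ≤ α ^ k := pow_le_pow_of_le_one h0 h1 (Nat.le_add_right k t)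
  | zero => exact ⟨0, by simp, by simp⟩
  | add y y' _ _ ih ih' =>
    obtain ⟨T, hT, hsum⟩ := ih
    obtain ⟨T', hT', hsum'⟩ := ih'
    refine ⟨T + T', ?_, by rw [Multiset.sum_add, hsum, hsum', mul_add]⟩
    intro b hb
    rcases Multiset.mem_add.1 hb with hb | hb
    exacts [hT b hb, hT' b hb]

/-- For an algebraic `α` with `0 < α < 1` and `N₀[α]` atomic, the omega-primality of
`N₀[α]` is infinite: for every `n` there is an atom `a` and a sum of atoms divisible by `a`
such that no subsum of at most `n` of them is divisible by `a`. -/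
theorem stmt3 (α : ℝ) (halg : IsAlgebraic ℚ α) (h0 : 0 < α) (h1 : α < 1)
    (hat : IsAtomicM (Nmon α)) :
    ∀ n : ℕ, ∃ a : ℝ, IsAtomOf (Nmon α) a ∧
      ∃ T : Multiset ℝ, (∀ b ∈ T, IsAtomOf (Nmon α) b) ∧ DvdM (Nmon α) a T.sum ∧
        ∀ S ≤ T, Multiset.card S ≤ n → ¬ DvdM (Nmon α) a S.sum := by
  intro n
  obtain ⟨a, ha⟩ := hat.exists_atom (mem_Nmon_iff.2 (one_mem _))
  have ha0 : 0 < a := (nonneg_of_mem_Nmon h0.le ha.1).lt_of_ne' ha.2.1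
  obtain ⟨y, hy, w, hw, hyw⟩ :=
    exists_one_add_eq_mul ((IsFractionRing.isAlgebraic_iff ℤ ℚ ℝ).2 halg) h0.ne'
  obtain ⟨r, hr⟩ := exists_pow_lt_of_lt_one (div_pos ha0 n.cast_add_one_pos) h1
  obtain ⟨z, hz, hpow⟩ := exists_one_add_pow_eq hy r
  obtain ⟨T, hT, hTsum⟩ := hat.exists_atoms_le_pow_sum_eq h0.le h1.le r
    (mem_Nmon_iff.2 (mul_mem (mem_Nmon_iff.1 ha.1) (pow_mem hw r)))
  refine ⟨a, ha, T, fun b hb => (hT b hb).1,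
    ⟨a * z, mem_Nmon_iff.2 (mul_mem (mem_Nmon_iff.1 ha.1) hz), ?_⟩, ?_⟩
  · rw [hTsum, show a + a * z = a * (1 + z) by ring, ← hpow, hyw]
    ring
  · intro S hST hcard hdvd
    have hlt : (n + 1) * α ^ r < a := by rwa [lt_div_iff₀' n.cast_add_one_pos] at hr
    have hle : S.sum ≤ n * α ^ r := calc
      S.sum ≤ Multiset.card S • α ^ r :=
        Multiset.sum_le_card_nsmul S _ fun b hb => (hT b (Multiset.mem_of_le hST hb)).2
      _ ≤ n * α ^ r := by
        rw [nsmul_eq_mul]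
        gcongr
    linarith [hdvd.le_of_Nmon h0.le, pow_nonneg h0.le r]
end

section
/- Fix a rational q with 1 < q < 2, and let M_q be the additive submonoid of ℚ_{≥0} generated by [1,q] ∩ ℚ. Then M_q is atomic and its set of atoms is exactly [1,q] ∩ ℚ. -/
/-- The Puiseux monoid generated by `[1, q] ∩ ℚ`. -/
def Mq (q : ℚ) : AddSubmonoid ℚ := AddSubmonoid.closure {x : ℚ | 1 ≤ x ∧ x ≤ q}

/-- `a` is an atom of the submonoid `M` of ℚ. -/
def IsAtomOfQ (M : AddSubmonoid ℚ) (a : ℚ) : Prop :=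
  a ∈ M ∧ a ≠ 0 ∧ ∀ b c : ℚ, b ∈ M → c ∈ M → a = b + c → b = 0 ∨ c = 0

/-- `M` is atomic: every nonzero element is a sum of atoms. -/
def IsAtomicMQ (M : AddSubmonoid ℚ) : Prop :=
  ∀ x ∈ M, x ≠ 0 → ∃ S : Multiset ℚ, (∀ a ∈ S, IsAtomOfQ M a) ∧ S.sum = x

lemma Mq_mem_iff (q : ℚ) (x : ℚ) :
    x ∈ Mq q ↔ ∃ S : Multiset ℚ, (∀ a ∈ S, 1 ≤ a ∧ a ≤ q) ∧ S.sum = x := by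
  constructor
  · intro hx
    obtain ⟨S, hS, hsum⟩ := AddSubmonoid.exists_multiset_of_mem_closure hx
    exact ⟨S, fun a ha => hS a ha, hsum⟩
  · rintro ⟨S, hS, rfl⟩
    exact AddSubmonoid.multiset_sum_mem _ S fun a ha =>
      AddSubmonoid.subset_closure (hS a ha)

lemma Mq_one_le (q : ℚ) {x : ℚ} (hx : x ∈ Mq q) (hx0 : x ≠ 0) : 1 ≤ x := by
  obtain ⟨S, hS, rfl⟩ := (Mq_mem_iff q x).mp hx
  rcases S.empty_or_exists_mem with rfl | ⟨a, ha⟩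
  · simp at hx0
  · obtain ⟨T, rfl⟩ := Multiset.exists_cons_of_mem ha
    rw [Multiset.sum_cons]
    have h1 : 1 ≤ a := (hS a (Multiset.mem_cons_self a T)).1
    have h2 : 0 ≤ T.sum := Multiset.sum_nonneg fun b hb =>
      le_trans zero_le_one (hS b (Multiset.mem_cons_of_mem hb)).1
    linarith

/-- For rational `1 < q < 2`, the monoid `M_q = ⟨[1,q] ∩ ℚ⟩` is atomic, and its atoms are
exactly the rationals in `[1, q]`. -/
theorem stmt4 (q : ℚ) (h1 : 1 < q) (h2 : q < 2) :
    IsAtomicMQ (Mq q) ∧ ∀ a : ℚ, IsAtomOfQ (Mq q) a ↔ (1 ≤ a ∧ a ≤ q) := by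
  have hatom : ∀ a : ℚ, (1 ≤ a ∧ a ≤ q) → IsAtomOfQ (Mq q) a := by
    rintro a ⟨ha1, ha2⟩
    refine ⟨AddSubmonoid.subset_closure ⟨ha1, ha2⟩, by linarith, ?_⟩
    intro b c hb hc habc
    by_contra h
    push_neg at h
    have hb1 := Mq_one_le q hb h.1
    have hc1 := Mq_one_le q hc h.2
    linarith
  constructor
  · intro x hx hx0
    obtain ⟨S, hS, rfl⟩ := (Mq_mem_iff q x).mp hx
    exact ⟨S, fun a ha => hatom a (hS a ha), rfl⟩
  · intro a
    refine ⟨?_, hatom a⟩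
    rintro ⟨haM, ha0, hmin⟩
    obtain ⟨S, hS, rfl⟩ := (Mq_mem_iff q _).mp haM
    rcases S.empty_or_exists_mem with rfl | ⟨b, hb⟩
    · simp at ha0
    · obtain ⟨T, rfl⟩ := Multiset.exists_cons_of_mem hb
      have hbq := hS b (Multiset.mem_cons_self b T)
      have hTM : T.sum ∈ Mq q := (Mq_mem_iff q _).mpr
        ⟨T, fun a ha => hS a (Multiset.mem_cons_of_mem ha), rfl⟩
      have hbM : b ∈ Mq q := AddSubmonoid.subset_closure hbq
      rcases hmin b T.sum hbM hTM (Multiset.sum_cons b T) with hb0 | hT0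
      · linarith [hbq.1]
      · rw [Multiset.sum_cons, hT0, add_zero]
        exact hbq
end

section
/- Fix a rational q with 1 < q < 2, let M_q = ⟨[1,q] ∩ ℚ⟩ ⊆ ℚ_{≥0}, and let c = ⌈1/(q−1)⌉. Then for every atom a of M_q (i.e., every a ∈ [1,q] ∩ ℚ), the omega-primality of a equals c + ⌈a⌉. In particular, ω(M_q) = c + 2 < ∞. -/
/-- Divisibility in the submonoid `M`. -/
def DvdMQ (M : AddSubmonoid ℚ) (x y : ℚ) : Prop := ∃ z ∈ M, y = x + z

/-- `ω(a) ≤ n`: whenever `a` divides a sum of atoms, it divides a subsum of at most `n`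
of them. -/
def OmegaLe (M : AddSubmonoid ℚ) (a : ℚ) (n : ℕ) : Prop :=
  ∀ T : Multiset ℚ, (∀ b ∈ T, IsAtomOfQ M b) → DvdMQ M a T.sum →
    ∃ S ≤ T, Multiset.card S ≤ n ∧ DvdMQ M a S.sum

/- The elements of `M_q` below `c` are exactly the points of the intervals `[k, kq]`, separated
by the gaps `((k-1)q, k)`, while everything from `c` on lies in `M_q`. Given `a` with `⌈a⌉ = d`
and `n = c + d - 1`, choose an atom `b` slightly above `1` for which every `j • b - a` with
`j ≤ n` falls into a gap, whereas `(n+1) • b - a ≥ c`: then `a` divides the sum of `n + 1` copies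
of `b` but no proper subsum, so `ω(a) > n`. Conversely, any `c + d` atoms sum to at least
`c + d ≥ c + a`, so `a` divides their sum. -/

theorem OmegaLe.mono {M : AddSubmonoid ℚ} {a : ℚ} {m n : ℕ} (h : OmegaLe M a m) (hmn : m ≤ n) :
    OmegaLe M a n := fun T hT hdvd =>
  let ⟨S, hST, hS, hdvdS⟩ := h T hT hdvd
  ⟨S, hST, hS.trans hmn, hdvdS⟩

theorem dvdMQ_iff_sub_mem {M : AddSubmonoid ℚ} {x y : ℚ} : DvdMQ M x y ↔ y - x ∈ M :=
  ⟨fun ⟨z, hz, h⟩ => by rwa [h, add_sub_cancel_left], fun h => ⟨y - x, h, by ring⟩⟩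

theorem mem_of_isAtomOfQ_closure {S : Set ℚ} (hS : ∀ x ∈ S, 0 < x) {a : ℚ}
    (ha : IsAtomOfQ (AddSubmonoid.closure S) a) : a ∈ S := by
  obtain ⟨hmem, hne, hsplit⟩ := ha
  obtain ⟨l, hl, rfl⟩ := AddSubmonoid.exists_list_of_mem_closure hmem
  match l, hl with
  | [], _ => exact absurd List.sum_nil hne
  | [x], hl => simpa using hl
  | x :: y :: t, hl =>
    have hl' : ∀ u ∈ y :: t, u ∈ S := fun u hu => hl u (List.mem_cons_of_mem x hu)
    rcases hsplit x (y :: t).sum (AddSubmonoid.subset_closure (hl x List.mem_cons_self))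
      (list_sum_mem fun u hu => AddSubmonoid.subset_closure (hl' u hu)) List.sum_cons with h | h
    · exact ((hS x (hl x List.mem_cons_self)).ne' h).elim
    · exact ((List.sum_pos _ (fun u hu => hS u (hl' u hu)) (List.cons_ne_nil y t)).ne' h).elim

section Mq

variable {q : ℚ}

theorem mem_Mq_iff {x : ℚ} : x ∈ Mq q ↔ x = 0 ∨ ∃ k : ℕ, 1 ≤ k ∧ (k : ℚ) ≤ x ∧ x ≤ k * q := by
  constructor
  · intro hx
    induction hx using AddSubmonoid.closure_induction with
    | mem y hy => exact Or.inr ⟨1, le_rfl, by simpa using hy.1, by simpa using hy.2⟩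
    | zero => exact Or.inl rfl
    | add x y _ _ ihx ihy =>
      rcases ihx with rfl | ⟨k, hk, hkx, hxk⟩
      · simpa using ihy
      rcases ihy with rfl | ⟨l, hl, hly, hyl⟩
      · simpa using Or.inr ⟨k, hk, hkx, hxk⟩
      · exact Or.inr ⟨k + l, by omega, by push_cast; linarith, by push_cast; linarith⟩
  · rintro (rfl | ⟨k, hk, hkx, hxk⟩)
    · exact (Mq q).zero_mem
    · have hk0 : (0 : ℚ) < k := by exact_mod_cast hk
      have hgen : x / k ∈ Mq q := AddSubmonoid.subset_closure
        ⟨(one_le_div hk0).2 hkx, (div_le_iff₀ hk0).2 (by linarith)⟩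
      have hx : x = k • (x / k) := by rw [nsmul_eq_mul]; field_simp
      exact hx ▸ (Mq q).nsmul_mem hgen k

theorem one_le_of_mem_Mq {x : ℚ} (hx : x ∈ Mq q) (hx0 : x ≠ 0) : 1 ≤ x := by
  obtain rfl | ⟨k, hk, hkx, -⟩ := mem_Mq_iff.mp hx
  · exact absurd rfl hx0
  · exact le_trans (by exact_mod_cast hk) hkx

theorem mem_Mq_of_le {c : ℕ} (hc : 1 ≤ c * (q - 1)) {x : ℚ} (hx : c ≤ x) : x ∈ Mq q := by
  have hc0 : 1 ≤ c := Nat.pos_of_ne_zero (by rintro rfl; norm_num at hc)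
  have hck : c ≤ ⌊x⌋₊ := Nat.le_floor hx
  have hkc : (c : ℚ) ≤ ⌊x⌋₊ := by exact_mod_cast hck
  have hxk : x < ⌊x⌋₊ + 1 := Nat.lt_floor_add_one x
  have hq : 0 ≤ q - 1 := by
    by_contra! h
    nlinarith [(Nat.cast_nonneg c : (0 : ℚ) ≤ c)]
  refine mem_Mq_iff.mpr (Or.inr ⟨⌊x⌋₊, hc0.trans hck, Nat.floor_le (by linarith), ?_⟩)
  nlinarith [mul_le_mul_of_nonneg_right hkc hq]

theorem not_mem_Mq_of_gap (hq : 0 ≤ q) {x : ℚ} (k : ℤ) (hlo : (k - 1) * q < x) (hhi : x < k) :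
    x ∉ Mq q := by
  intro hx
  rcases mem_Mq_iff.mp hx with rfl | ⟨m, -, hmx, hxm⟩
  · have : (1 : ℚ) ≤ k := by exact_mod_cast (show (1 : ℤ) ≤ k by exact_mod_cast hhi)
    nlinarith
  · have hmk : (m : ℤ) < k := by exact_mod_cast hmx.trans_lt hhi
    have : (m : ℚ) ≤ k - 1 := by exact_mod_cast Int.le_sub_one_of_lt hmk
    nlinarith

theorem isAtomOfQ_Mq_iff (h2 : q < 2) {a : ℚ} : IsAtomOfQ (Mq q) a ↔ 1 ≤ a ∧ a ≤ q := by
  refine ⟨mem_of_isAtomOfQ_closure fun x hx => by linarith [hx.1], fun ha => ?_⟩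
  refine ⟨AddSubmonoid.subset_closure ha, by linarith [ha.1], fun b c hb hc habc => ?_⟩
  by_contra! h
  linarith [one_le_of_mem_Mq hb h.1, one_le_of_mem_Mq hc h.2, ha.2]

theorem omegaLe_Mq_of_le {c N : ℕ} (hc : 1 ≤ c * (q - 1)) {a : ℚ} (hN : c + a ≤ N) :
    OmegaLe (Mq q) a N := by
  intro T hT hdvd
  rcases le_or_gt (Multiset.card T) N with hTN | hNT
  · exact ⟨T, le_rfl, hTN, hdvd⟩
  obtain ⟨S, hS⟩ := Multiset.card_pos_iff_exists_mem.mp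
    (by rw [Multiset.card_powersetCard]; exact Nat.choose_pos hNT.le)
  obtain ⟨hST, hSN⟩ := Multiset.mem_powersetCard.mp hS
  have hsum : (N : ℚ) ≤ S.sum := by
    have hS1 : ∀ x ∈ S, (1 : ℚ) ≤ x := fun x hx =>
      have hx := hT x (Multiset.mem_of_le hST hx)
      one_le_of_mem_Mq hx.1 hx.2.1
    simpa [hSN] using Multiset.card_nsmul_le_sum hS1
  exact ⟨S, hST, hSN.le, dvdMQ_iff_sub_mem.mpr (mem_Mq_of_le hc (by linarith))⟩

end Mq

theorem not_omegaLe_of_replicate {M : AddSubmonoid ℚ} {a b : ℚ} {n : ℕ} (hb : IsAtomOfQ M b)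
    (hdvd : DvdMQ M a ((n + 1) • b)) (hndvd : ∀ j ≤ n, ¬ DvdMQ M a (j • b)) :
    ¬ OmegaLe M a n := by
  intro h
  obtain ⟨S, hS, hcard, hdvdS⟩ := h (Multiset.replicate (n + 1) b)
    (fun x hx => Multiset.eq_of_mem_replicate hx ▸ hb) (by rwa [Multiset.sum_replicate])
  obtain ⟨k, hk, rfl⟩ := Multiset.le_replicate_iff.mp hS
  rw [Multiset.sum_replicate] at hdvdS
  exact hndvd k (by simpa using hcard) hdvdS

theorem not_omegaLe_Mq_of_lt {q : ℚ} (h1 : 1 < q) (h2 : q < 2) {c : ℕ} (hc₁ : 1 ≤ c * (q - 1))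
    (hc₂ : (c - 1) * (q - 1) < 1) {a : ℚ} (ha : 0 < a) {m : ℕ} (hm : m < c + ⌈a⌉₊) :
    ¬ OmegaLe (Mq q) a m := by
  set d := ⌈a⌉₊
  have hd₁ : (d : ℚ) - 1 < a := by linarith [Nat.ceil_lt_add_one ha.le]
  have hd₂ : a ≤ d := Nat.le_ceil a
  have hdq : (d : ℚ) < d * q := by nlinarith
  have hc0 : 0 < c := Nat.pos_of_ne_zero (by rintro rfl; norm_num at hc₁)
  set n := c + d - 1
  have hn : (n : ℚ) = c + d - 1 := by
    rw [Nat.cast_sub (by omega), Nat.cast_add, Nat.cast_one]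
  have hn0 : (0 : ℚ) < n := by
    have : (1 : ℚ) ≤ c := by exact_mod_cast hc0
    linarith [(Nat.cast_nonneg d : (0 : ℚ) ≤ d)]
  -- `t` will be `n (b - 1)`; its bounds put each `j • b - a` with `j ≤ n` into the gap
  -- `((j - d) q, j - d + 1)`, and they are compatible because `(c - 1) (q - 1) < 1`.
  obtain ⟨t, ht₁, ht₂⟩ :
      ∃ t, max 0 (n * (q - 1) - d * q + a) < t ∧ t < min (n * (q - 1)) (a - d + 1) :=
    exists_between (by
      simp only [max_lt_iff, lt_min_iff]
      refine ⟨⟨by positivity, by linarith⟩, by nlinarith, by nlinarith⟩)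
  rw [max_lt_iff] at ht₁
  rw [lt_min_iff] at ht₂
  obtain ⟨b, hb⟩ : ∃ b, n * (b - 1) = t := ⟨1 + t / n, by field_simp; ring⟩
  have hb₁ : 1 ≤ b := by nlinarith
  have hb₂ : b ≤ q := by nlinarith
  refine fun h => not_omegaLe_of_replicate (n := n) ((isAtomOfQ_Mq_iff h2).mpr ⟨hb₁, hb₂⟩) ?_ ?_
    (h.mono (by omega))
  · refine dvdMQ_iff_sub_mem.mpr (mem_Mq_of_le hc₁ ?_)
    rw [nsmul_eq_mul]; push_cast
    nlinarith [mul_nonneg hn0.le (sub_nonneg.mpr hb₁)]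
  · intro j hj hdvd
    have hjn : (j : ℚ) ≤ n := by exact_mod_cast hj
    have hjb : j * (b - 1) ≤ n * (b - 1) := mul_le_mul_of_nonneg_right hjn (by linarith)
    have hjq : j * (q - b) ≤ n * (q - b) := mul_le_mul_of_nonneg_right hjn (by linarith)
    refine not_mem_Mq_of_gap (q := q) (by linarith) (j - d + 1) ?_ ?_
      (by simpa [nsmul_eq_mul] using dvdMQ_iff_sub_mem.mp hdvd) <;> push_cast <;> linarith

/-- For rational `1 < q < 2` and `c = ⌈1/(q-1)⌉`, every atom `a ∈ [1,q] ∩ ℚ` of `M_q` has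
omega-primality exactly `c + ⌈a⌉`; in particular `ω(M_q) = c + 2 < ∞`. -/
theorem stmt5 (q : ℚ) (h1 : 1 < q) (h2 : q < 2) (c : ℕ) (hc : (c : ℤ) = ⌈1 / (q - 1)⌉) :
    (∀ a : ℚ, 1 ≤ a → a ≤ q →
      OmegaLe (Mq q) a (c + (⌈a⌉).toNat) ∧ ∀ m : ℕ, m < c + (⌈a⌉).toNat → ¬ OmegaLe (Mq q) a m)
    ∧ ((∀ a : ℚ, IsAtomOfQ (Mq q) a → OmegaLe (Mq q) a (c + 2)) ∧
        ∃ a : ℚ, IsAtomOfQ (Mq q) a ∧ ¬ OmegaLe (Mq q) a (c + 1)) := by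
  have hq : 0 < q - 1 := by linarith
  have hc₁ : 1 ≤ c * (q - 1) := by
    have := Int.le_ceil (1 / (q - 1))
    rwa [← hc, Int.cast_natCast, div_le_iff₀ hq] at this
  have hc₂ : (c - 1) * (q - 1) < 1 := by
    have := Int.ceil_lt_add_one (1 / (q - 1))
    rwa [← hc, Int.cast_natCast, ← sub_lt_iff_lt_add, lt_div_iff₀ hq] at this
  have omega_eq : ∀ a : ℚ, 0 < a →
      OmegaLe (Mq q) a (c + ⌈a⌉₊) ∧ ∀ m < c + ⌈a⌉₊, ¬ OmegaLe (Mq q) a m := fun a ha =>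
    ⟨omegaLe_Mq_of_le hc₁ (by push_cast; linarith [Nat.le_ceil a]),
      fun _ hm => not_omegaLe_Mq_of_lt h1 h2 hc₁ hc₂ ha hm⟩
  simp only [Int.ceil_toNat]
  refine ⟨fun a ha _ => omega_eq a (by linarith), fun a ha => ?_,
    q, (isAtomOfQ_Mq_iff h2).mpr ⟨h1.le, le_rfl⟩, ?_⟩
  · obtain ⟨ha₁, ha₂⟩ := (isAtomOfQ_Mq_iff h2).mp ha
    have : ⌈a⌉₊ ≤ 2 := Nat.ceil_le.mpr (by norm_num; linarith)
    exact (omega_eq a (by linarith)).1.mono (by omega)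
  · have : ⌈q⌉₊ = 2 := (Nat.ceil_eq_iff two_ne_zero).mpr ⟨by norm_num; linarith, h2.le⟩
    exact (omega_eq q (by linarith)).2 (c + 1) (by omega)
end

section
/- Fix a rational q with 1 < q < 2 and let M_q = ⟨[1,q] ∩ ℚ⟩ and c = ⌈1/(q−1)⌉. Then M_q = {0} ∪ ⋃_{k=1}^{c−1}([k, kq] ∩ ℚ) ∪ ([c, ∞) ∩ ℚ), where kq < k+1 for all 1 ≤ k ≤ c−1 and cq ≥ c+1. -/
lemma mem_Mq_of_interval (q : ℚ) (n : ℕ) (hn : 1 ≤ n) {x : ℚ}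
    (hx1 : (n : ℚ) ≤ x) (hx2 : x ≤ (n : ℚ) * q) : x ∈ Mq q := by
  have hn0 : (0 : ℚ) < n := by exact_mod_cast hn
  have hx : x = n • (x / n) := by
    rw [nsmul_eq_mul, mul_div_cancel₀ _ (ne_of_gt hn0)]
  rw [hx]
  apply AddSubmonoid.nsmul_mem
  apply AddSubmonoid.subset_closure
  constructor
  · exact (one_le_div hn0).mpr hx1
  · rw [div_le_iff₀ hn0]; linarith

lemma Mq_mem_struct (q : ℚ) {x : ℚ} (hx : x ∈ Mq q) :
    x = 0 ∨ ∃ n : ℕ, 1 ≤ n ∧ (n : ℚ) ≤ x ∧ x ≤ (n : ℚ) * q := by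
  have hq : 0 ≤ q ∨ True := Or.inr trivial
  let S : AddSubmonoid ℚ :=
    { carrier := {x : ℚ | x = 0 ∨ ∃ n : ℕ, 1 ≤ n ∧ (n : ℚ) ≤ x ∧ x ≤ (n : ℚ) * q}
      zero_mem' := Or.inl rfl
      add_mem' := by
        rintro a b (rfl | ⟨m, hm, ham, hamq⟩) hb
        · simpa using hb
        · rcases hb with rfl | ⟨n, hn, hbn, hbnq⟩
          · exact Or.inr ⟨m, hm, by simpa using ham, by simpa using hamq⟩
          · refine Or.inr ⟨m + n, le_trans hm (Nat.le_add_right _ _), ?_, ?_⟩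
            · push_cast; linarith
            · push_cast; nlinarith }
  have : Mq q ≤ S := AddSubmonoid.closure_le.mpr
    (fun y hy => Or.inr ⟨1, le_refl 1, by simpa using hy.1, by simpa using hy.2⟩)
  exact this hx

/-- For rational `1 < q < 2` and `c = ⌈1/(q-1)⌉`, the monoid `M_q` equals
`{0} ∪ ⋃_{k=1}^{c-1} ([k, kq] ∩ ℚ) ∪ ([c, ∞) ∩ ℚ)`, with `kq < k+1` for `1 ≤ k ≤ c-1`
and `cq ≥ c+1`. -/
theorem stmt6 (q : ℚ) (h1 : 1 < q) (h2 : q < 2) (c : ℕ) (hc : (c : ℤ) = ⌈1 / (q - 1)⌉) :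
    ((Mq q : Set ℚ) =
      {0} ∪ (⋃ k ∈ Set.Icc 1 (c - 1), {x : ℚ | (k : ℚ) ≤ x ∧ x ≤ (k : ℚ) * q})
        ∪ {x : ℚ | (c : ℚ) ≤ x})
    ∧ (∀ k : ℕ, 1 ≤ k → k ≤ c - 1 → (k : ℚ) * q < (k : ℚ) + 1)
    ∧ (c : ℚ) * q ≥ (c : ℚ) + 1 := by
  have hq0 : (0 : ℚ) < q - 1 := by linarith
  have hcge : 1 / (q - 1) ≤ (c : ℚ) := by
    have := Int.le_ceil (1 / (q - 1))
    rw [← hc] at this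
    exact_mod_cast this
  have hclt : (c : ℚ) < 1 / (q - 1) + 1 := by
    have := Int.ceil_lt_add_one (1 / (q - 1))
    rw [← hc] at this
    exact_mod_cast this
  have h1q : (1 : ℚ) < 1 / (q - 1) := by
    rw [lt_div_iff₀ hq0]; linarith
  have hc2 : 2 ≤ c := by
    have : (1 : ℚ) < (c : ℚ) := lt_of_lt_of_le h1q hcge
    have h1c : 1 < c := by exact_mod_cast this
    omega
  have hcq : (c : ℚ) * q ≥ (c : ℚ) + 1 := by
    have h := (div_le_iff₀ hq0).mp hcge
    nlinarith
  have hmid : ∀ k : ℕ, 1 ≤ k → k ≤ c - 1 → (k : ℚ) * q < (k : ℚ) + 1 := by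
    intro k hk1 hk2
    have hkc : (k : ℚ) ≤ (c : ℚ) - 1 := by
      have : k + 1 ≤ c := by omega
      have : (k : ℚ) + 1 ≤ (c : ℚ) := by exact_mod_cast this
      linarith
    have hklt : (k : ℚ) < 1 / (q - 1) := by linarith
    have : (k : ℚ) * (q - 1) < 1 := by
      rw [lt_div_iff₀ hq0] at hklt; linarith
    nlinarith
  refine ⟨?_, hmid, hcq⟩
  ext x
  simp only [Set.mem_union, Set.mem_iUnion, Set.mem_singleton_iff, Set.mem_setOf_eq,
    Set.mem_Icc, SetLike.mem_coe]
  constructor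
  · intro hx
    rcases Mq_mem_struct q hx with rfl | ⟨n, hn, hxn, hxnq⟩
    · exact Or.inl (Or.inl rfl)
    · by_cases hnc : n ≤ c - 1
      · exact Or.inl (Or.inr ⟨n, ⟨hn, hnc⟩, hxn, hxnq⟩)
      · refine Or.inr ?_
        have : c ≤ n := by omega
        have : (c : ℚ) ≤ (n : ℚ) := by exact_mod_cast this
        linarith
  · rintro ((rfl | ⟨k, ⟨hk1, hk2⟩, hxk, hxkq⟩) | hxc)
    · exact AddSubmonoid.zero_mem _
    · exact mem_Mq_of_interval q k hk1 hxk hxkq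
    · -- x ≥ c; use n = ⌊x⌋
      have hx0 : (0 : ℚ) ≤ x := le_trans (by positivity) hxc
      set n : ℕ := ⌊x⌋.toNat with hn
      have hfl : (⌊x⌋ : ℚ) ≤ x := Int.floor_le x
      have hfl0 : 0 ≤ ⌊x⌋ := Int.floor_nonneg.mpr hx0
      have hncast : (n : ℚ) = (⌊x⌋ : ℚ) := by
        rw [hn]; exact_mod_cast Int.toNat_of_nonneg hfl0
      have hcn : c ≤ n := by
        have : (c : ℤ) ≤ ⌊x⌋ := by
          rw [Int.le_floor]; exact_mod_cast hxc
        omega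
      have hnx : (n : ℚ) ≤ x := by rw [hncast]; exact hfl
      have hxlt : x < (n : ℚ) + 1 := by
        rw [hncast]; exact Int.lt_floor_add_one x
      have hcnq : (c : ℚ) ≤ (n : ℚ) := by exact_mod_cast hcn
      have hxnq : x ≤ (n : ℚ) * q := by nlinarith
      exact mem_Mq_of_interval q n (by omega) hnx hxnq
end

section
/- Let α be a positive algebraic number such that the additive monoid N₀[α] is atomic. If N₀[α] is not finitely generated, then the elasticity of N₀[α] is infinite. -/
/-- The set of factorization lengths of `x` in `M`. -/
def LSet (M : AddSubmonoid ℝ) (x : ℝ) : Set ℕ :=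
  {n | ∃ S : Multiset ℝ, (∀ a ∈ S, IsAtomOf M a) ∧ S.sum = x ∧ Multiset.card S = n}

/-! If some power `α ^ m` were not an atom of `N₀[α]`, then neither would be any higher power
`α ^ i = α ^ (i - m) * α ^ m`, so atomicity would make `N₀[α]` generated by `1, …, α ^ (m - 1)`.
Hence every `α ^ n` is an atom, and every `A ∈ ℕ[X]` gives a factorization of `A(α)` of length
`A(1)`. As `N₀[1] = ℕ` is finitely generated, `α ≠ 1`, so dividing an integer polynomial vanishing
at `α` by a power of `X - 1` and splitting it into its positive and negative parts yields
`A, B ∈ ℕ[X]` with `A(α) = B(α)` and `A(1) < B(1)`. Then `A(α) ^ k = B(α) ^ k` has factorizations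
of lengths `A(1) ^ k` and `B(1) ^ k`, whose ratio is unbounded. -/

open Polynomial

lemma mem_LSet_add {M : AddSubmonoid ℝ} {x y : ℝ} {m n : ℕ} (hm : m ∈ LSet M x)
    (hn : n ∈ LSet M y) : m + n ∈ LSet M (x + y) := by
  obtain ⟨S, hS, rfl, rfl⟩ := hm
  obtain ⟨T, hT, rfl, rfl⟩ := hn
  exact ⟨S + T, fun a ha => (Multiset.mem_add.1 ha).elim (hS a) (hT a),
    Multiset.sum_add S T, Multiset.card_add S T⟩

lemma mem_LSet_natCast_mul {M : AddSubmonoid ℝ} {a : ℝ} (ha : IsAtomOf M a) (n : ℕ) :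
    n ∈ LSet M (n * a) :=
  ⟨Multiset.replicate n a, fun _ hb => Multiset.eq_of_mem_replicate hb ▸ ha, by simp, by simp⟩

lemma mem_of_mem_LSet {M : AddSubmonoid ℝ} {x : ℝ} {n : ℕ} (h : n ∈ LSet M x) : x ∈ M := by
  obtain ⟨S, hS, rfl, -⟩ := h
  exact M.multiset_sum_mem S fun a ha => (hS a ha).1

lemma IsAtomicM.fg_of_finite_atoms {M : AddSubmonoid ℝ} (hM : IsAtomicM M)
    (hfin : {a | IsAtomOf M a}.Finite) : M.FG := by
  refine ⟨hfin.toFinset, le_antisymm ?_ fun x hx => ?_⟩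
  · rw [AddSubmonoid.closure_le]
    intro a ha
    exact (hfin.mem_toFinset.1 ha).1
  · rcases eq_or_ne x 0 with rfl | hx0
    · exact zero_mem _
    obtain ⟨S, hS, rfl⟩ := hM x hx hx0
    exact AddSubmonoid.multiset_sum_mem _ _ fun a ha =>
      AddSubmonoid.subset_closure (hfin.mem_toFinset.2 (hS a ha))

lemma IsAtomOf.mem_of_closure {s : Set ℝ} (hs : 0 ∉ s) {a : ℝ}
    (ha : IsAtomOf (AddSubmonoid.closure s) a) : a ∈ s := by
  obtain ⟨hmem, hne, hsplit⟩ := ha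
  obtain ⟨l, hl, rfl⟩ := AddSubmonoid.exists_multiset_of_mem_closure hmem
  obtain ⟨b, hb⟩ := Multiset.exists_mem_of_ne_zero fun h : l = 0 => hne (by simp [h])
  obtain ⟨l, rfl⟩ := Multiset.exists_cons_of_mem hb
  have hbs := hl b (Multiset.mem_cons_self b l)
  have hls : l.sum ∈ AddSubmonoid.closure s := AddSubmonoid.multiset_sum_mem _ _ fun c hc =>
    AddSubmonoid.subset_closure (hl c (Multiset.mem_cons_of_mem hc))
  rcases hsplit b l.sum (AddSubmonoid.subset_closure hbs) hls (Multiset.sum_cons b l) with h | h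
  · exact absurd (h ▸ hbs) hs
  · rwa [Multiset.sum_cons, h, add_zero]

lemma IsAtomOf.of_mul_s7 {S : Subsemiring ℝ} {y a : ℝ} (hy : y ∈ S) (ha : a ∈ S)
    (h : IsAtomOf S.toAddSubmonoid (y * a)) : IsAtomOf S.toAddSubmonoid a := by
  obtain ⟨-, hya, hsplit⟩ := h
  have hy0 : y ≠ 0 := left_ne_zero_of_mul hya
  refine ⟨ha, right_ne_zero_of_mul hya, fun b c hb hc habc => ?_⟩
  refine (hsplit (y * b) (y * c) (S.mul_mem hy hb) (S.mul_mem hy hc) (by rw [habc, mul_add])).imp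
    ?_ ?_ <;> exact fun h => (mul_eq_zero.1 h).resolve_left hy0

lemma Nmon_eq_subsemiringClosure (α : ℝ) : Nmon α = (Subsemiring.closure {α}).toAddSubmonoid := by
  ext x
  rw [Subsemiring.mem_toAddSubmonoid, Subsemiring.mem_closure_iff,
    ← Submonoid.powers_eq_closure, Submonoid.coe_powers]
  rfl

lemma isAtomOf_pow {α : ℝ} (hα : α ≠ 0) (hat : IsAtomicM (Nmon α)) (hfg : ¬(Nmon α).FG)
    (m : ℕ) : IsAtomOf (Nmon α) (α ^ m) := by
  by_contra hm
  refine hfg (hat.fg_of_finite_atoms ((Set.finite_range fun i : Fin m => α ^ (i : ℕ)).subset ?_))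
  intro a ha
  obtain ⟨i, rfl⟩ := ha.mem_of_closure (by simp [hα])
  have hi : i < m := by
    by_contra! hmi
    have hαS : α ∈ Subsemiring.closure {α} := Subsemiring.subset_closure rfl
    rw [Nmon_eq_subsemiringClosure] at ha hm
    refine hm (IsAtomOf.of_mul_s7 (pow_mem hαS (i - m)) (pow_mem hαS m) ?_)
    rwa [← pow_add, Nat.sub_add_cancel hmi]
  exact ⟨⟨i, hi⟩, rfl⟩

lemma aeval_pos {S : Type*} [Semiring S] [PartialOrder S] [IsStrictOrderedRing S] {x : S}
    (hx : 0 < x) {A : ℕ[X]} (hA : A ≠ 0) : 0 < aeval x A := by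
  rw [aeval_eq_sum_range]
  refine Finset.sum_pos' (fun i _ => by positivity) ⟨A.natDegree, by simp, ?_⟩
  exact nsmul_pos (pow_pos hx _) (leadingCoeff_ne_zero.2 hA)

lemma exists_aeval_eq_zero_eval_one_ne_zero {K : Type*} [Field K] [CharZero K] {α : K}
    (halg : IsAlgebraic ℚ α) (hα : α ≠ 1) : ∃ Q : ℤ[X], aeval α Q = 0 ∧ Q.eval 1 ≠ 0 := by
  obtain ⟨P, hP0, hPα⟩ := (IsFractionRing.isAlgebraic_iff ℤ ℚ K).2 halg
  obtain ⟨Q, hPQ, hQ⟩ := P.exists_eq_pow_rootMultiplicity_mul_and_not_dvd hP0 1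
  refine ⟨Q, ?_, fun h => hQ (dvd_iff_isRoot.2 h)⟩
  rw [hPQ, map_mul, map_pow, map_sub, aeval_X, aeval_C, map_one] at hPα
  exact (mul_eq_zero.1 hPα).resolve_left (pow_ne_zero _ (sub_ne_zero.2 hα))

lemma Polynomial.exists_eq_map_sub_map (Q : ℤ[X]) :
    ∃ A B : ℕ[X], Q = A.map (algebraMap ℕ ℤ) - B.map (algebraMap ℕ ℤ) := by
  induction Q using Polynomial.induction_on' with
  | add P Q hP hQ =>
    obtain ⟨A, B, rfl⟩ := hP
    obtain ⟨A', B', rfl⟩ := hQ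
    exact ⟨A + A', B + B', by simp only [Polynomial.map_add]; ring⟩
  | monomial n a =>
    refine ⟨monomial n a.toNat, monomial n (-a).toNat, ?_⟩
    rw [map_monomial, map_monomial, ← map_sub]
    simp

lemma exists_aeval_eq_eval_one_lt {α : ℝ} (h0 : 0 < α) (halg : IsAlgebraic ℚ α) (hα : α ≠ 1) :
    ∃ A B : ℕ[X], aeval α A = aeval α B ∧ 0 < A.eval 1 ∧ A.eval 1 < B.eval 1 := by
  obtain ⟨Q, hQα, hQ1⟩ := exists_aeval_eq_zero_eval_one_ne_zero halg hα
  obtain ⟨A, B, rfl⟩ := Q.exists_eq_map_sub_map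
  rw [map_sub, aeval_map_algebraMap, aeval_map_algebraMap, sub_eq_zero] at hQα
  rw [eval_sub, eval_one_map, eval_one_map, sub_ne_zero, ne_eq,
    (algebraMap ℕ ℤ).injective_nat.eq_iff] at hQ1
  have hpos {A B : ℕ[X]} (hAB : aeval α A = aeval α B) (hlt : A.eval 1 < B.eval 1) :
      0 < A.eval 1 := by
    have hB : B ≠ 0 := by rintro rfl; simp at hlt
    have hA : A ≠ 0 := by rintro rfl; exact (aeval_pos h0 hB).ne (by rw [← hAB, map_zero])
    have h1 := aeval_pos (one_pos (α := ℕ)) hA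
    rwa [coe_aeval_eq_eval] at h1
  rcases lt_or_gt_of_ne hQ1 with hlt | hlt
  · exact ⟨A, B, hQα, hpos hQα hlt, hlt⟩
  · exact ⟨B, A, hQα.symm, hpos hQα.symm hlt, hlt⟩

lemma eval_one_mem_LSet_aeval {M : AddSubmonoid ℝ} {α : ℝ} (hatom : ∀ n, IsAtomOf M (α ^ n))
    (A : ℕ[X]) : A.eval 1 ∈ LSet M (aeval α A) := by
  induction A using Polynomial.induction_on' with
  | add A B hA hB => simpa only [eval_add, map_add] using mem_LSet_add hA hB
  | monomial n c => simpa [aeval_monomial] using mem_LSet_natCast_mul (hatom n) c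

/-- For a positive algebraic `α` with `N₀[α]` atomic but not finitely generated, the
elasticity of `N₀[α]` is infinite: length ratios are unbounded. -/
theorem stmt7 (α : ℝ) (h0 : 0 < α) (halg : IsAlgebraic ℚ α)
    (hat : IsAtomicM (Nmon α)) (hfg : ¬ (Nmon α).FG) :
    ∀ C : ℝ, ∃ x ∈ Nmon α, x ≠ 0 ∧ ∃ l L : ℕ,
      l ∈ LSet (Nmon α) x ∧ L ∈ LSet (Nmon α) x ∧ C * l < L := by
  intro C
  have hα1 : α ≠ 1 := by
    rintro rfl
    exact hfg ⟨{1}, by simp [Nmon]⟩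
  have hatom := isAtomOf_pow h0.ne' hat hfg
  obtain ⟨A, B, hAB, hA, hAB1⟩ := exists_aeval_eq_eval_one_lt h0 halg hα1
  have hA0 : A ≠ 0 := by rintro rfl; simp at hA
  have hratio : 1 < ((B.eval 1 : ℕ) : ℝ) / (A.eval 1 : ℕ) :=
    (one_lt_div (by exact_mod_cast hA)).2 (by exact_mod_cast hAB1)
  obtain ⟨k, hk⟩ := pow_unbounded_of_one_lt C hratio
  have hAk := eval_one_mem_LSet_aeval hatom (A ^ k)
  have hBk := eval_one_mem_LSet_aeval hatom (B ^ k)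
  rw [map_pow, ← hAB, ← map_pow] at hBk
  refine ⟨_, mem_of_mem_LSet hAk, (aeval_pos h0 (pow_ne_zero k hA0)).ne', _, _, hAk, hBk, ?_⟩
  rw [eval_pow, eval_pow]
  push_cast
  rwa [div_pow, lt_div_iff₀ (by positivity)] at hk
end

section
/- Let α be a positive algebraic number with minimal pair (p(X), q(X)) (so p(α) = q(α), p, q ∈ ℕ₀[X] sharing no monomials of the same degree). If α ∉ ℕ, then p(1) ≠ q(1), and for every n ∈ ℕ the element β_n = p(α)ⁿ of N₀[α] admits factorizations of lengths p(1)ⁿ and q(1)ⁿ; consequently ρ(N₀[α]) ≥ (q(1)/p(1))ⁿ when q(1) > p(1). -/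
open Polynomial

/-- Evaluation of a polynomial with ℕ-coefficients at a real number. -/
noncomputable def pev (α : ℝ) (f : Polynomial ℕ) : ℝ :=
  Polynomial.eval₂ (Nat.castRingHom ℝ) α f

/-- `(p, q)` is the minimal pair of `α`: `p, q ∈ ℕ₀[X]` share no monomials of the same
degree and `ℓ · m_α = p − q` where `ℓ` is the least positive integer with `ℓ · m_α ∈ ℤ[X]`. -/
def IsMinimalPair (α : ℝ) (p q : Polynomial ℕ) : Prop :=
  (∀ n : ℕ, p.coeff n = 0 ∨ q.coeff n = 0) ∧
  ∃ ℓ : ℕ, 0 < ℓ ∧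
    (ℓ : ℚ) • minpoly ℚ α = p.map (Nat.castRingHom ℚ) - q.map (Nat.castRingHom ℚ) ∧
    ∀ m : ℕ, 0 < m → (∀ n : ℕ, ((m : ℚ) * (minpoly ℚ α).coeff n).den = 1) → ℓ ≤ m

/-! `p(α) = q(α)` because `α` is a root of `ℓ · m_α = p - q`, so `p(α)ⁿ = q(α)ⁿ`, and reading off the
monomials of `pⁿ` and `qⁿ` at `α` gives factorizations of lengths `pⁿ(1) = p(1)ⁿ` and `q(1)ⁿ`. If
`p(1) = q(1)`, then `1` is a rational root of the irreducible `m_α`, forcing `α = 1 ∈ ℕ`. -/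

noncomputable def evalMonomials (α : ℝ) (f : ℕ[X]) : Multiset ℝ :=
  f.support.val.bind fun k => Multiset.replicate (f.coeff k) (α ^ k)

section evalMonomials

variable (α : ℝ) (f : ℕ[X])

lemma exists_eq_pow_of_mem_evalMonomials {a : ℝ} (ha : a ∈ evalMonomials α f) :
    ∃ k : ℕ, a = α ^ k := by
  simp only [evalMonomials, Multiset.mem_bind, Multiset.mem_replicate] at ha
  obtain ⟨k, -, -, rfl⟩ := ha
  exact ⟨k, rfl⟩

lemma sum_evalMonomials : (evalMonomials α f).sum = pev α f := by
  rw [evalMonomials, Multiset.sum_bind, pev, eval₂_eq_sum, Polynomial.sum, Finset.sum]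
  congr 1
  refine Multiset.map_congr rfl fun k _ => ?_
  simp [Multiset.sum_replicate, nsmul_eq_mul]

lemma card_evalMonomials : Multiset.card (evalMonomials α f) = f.eval 1 := by
  rw [evalMonomials, Multiset.card_bind, eval_eq_sum, Polynomial.sum, Finset.sum]
  congr 1
  refine Multiset.map_congr rfl fun k _ => ?_
  simp

lemma pev_mem_Nmon : pev α f ∈ Nmon α := by
  rw [← sum_evalMonomials]
  refine AddSubmonoid.multiset_sum_mem _ _ fun a ha => ?_
  obtain ⟨k, rfl⟩ := exists_eq_pow_of_mem_evalMonomials α f ha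
  exact AddSubmonoid.subset_closure ⟨k, rfl⟩

lemma eval_one_mem_LSet (hatoms : ∀ n : ℕ, IsAtomOf (Nmon α) (α ^ n)) :
    f.eval 1 ∈ LSet (Nmon α) (pev α f) := by
  refine ⟨evalMonomials α f, fun a ha => ?_, sum_evalMonomials α f, card_evalMonomials α f⟩
  obtain ⟨k, rfl⟩ := exists_eq_pow_of_mem_evalMonomials α f ha
  exact hatoms k

end evalMonomials

lemma pev_pow (α : ℝ) (f : ℕ[X]) (n : ℕ) : pev α (f ^ n) = pev α f ^ n :=
  eval₂_pow _ _ n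

lemma pev_pos {α : ℝ} (h0 : 0 < α) {f : ℕ[X]} (hf : f ≠ 0) : 0 < pev α f := by
  rw [pev, eval₂_eq_sum, Polynomial.sum]
  refine Finset.sum_pos (fun i hi => mul_pos ?_ (pow_pos h0 i)) (support_nonempty.2 hf)
  exact Nat.cast_pos.2 (Nat.pos_of_ne_zero (mem_support_iff.1 hi))

lemma eval_one_pos {f : ℕ[X]} (hf : f ≠ 0) : 0 < f.eval 1 := by
  rw [eval_eq_sum, Polynomial.sum]
  refine Finset.sum_pos (fun i hi => ?_) (support_nonempty.2 hf)
  simpa using Nat.pos_of_ne_zero (mem_support_iff.1 hi)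

lemma aeval_map_natCast (α : ℝ) (f : ℕ[X]) :
    aeval α (f.map (Nat.castRingHom ℚ)) = pev α f := by
  rw [aeval_def, eval₂_map, pev]
  congr 1

namespace IsMinimalPair

variable {α : ℝ} {p q : ℕ[X]}

lemma pev_eq (h : IsMinimalPair α p q) : pev α p = pev α q := by
  obtain ⟨-, ℓ, -, heq, -⟩ := h
  have h := congrArg (aeval α) heq
  rw [map_sub, map_smul, minpoly.aeval, smul_zero, aeval_map_natCast, aeval_map_natCast] at h
  exact sub_eq_zero.1 h.symm

lemma left_ne_zero (h : IsMinimalPair α p q) (h0 : 0 < α) (hα : IsIntegral ℚ α) : p ≠ 0 := by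
  rintro rfl
  have hq : q = 0 := by
    by_contra hq
    have hq0 : pev α q = 0 := by rw [← h.pev_eq, pev, eval₂_zero]
    exact (pev_pos h0 hq).ne' hq0
  obtain ⟨-, ℓ, hℓ, heq, -⟩ := h
  rw [hq, Polynomial.map_zero, sub_zero, smul_eq_zero] at heq
  exact heq.elim (Nat.cast_ne_zero.2 hℓ.ne') (minpoly.ne_zero hα)

lemma eval_one_ne (h : IsMinimalPair α p q) (hα : IsIntegral ℚ α) (h1 : α ≠ 1) :
    p.eval 1 ≠ q.eval 1 := by
  intro hpq
  obtain ⟨-, ℓ, hℓ, heq, -⟩ := h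
  have hroot : IsRoot (minpoly ℚ α) 1 := by
    have he := congrArg (eval 1) heq
    rw [eval_smul, eval_sub, eval_one_map, eval_one_map, hpq, sub_self, smul_eq_mul] at he
    exact (mul_eq_zero.1 he).resolve_left (Nat.cast_ne_zero.2 hℓ.ne')
  exact h1 (by simpa using (minpoly.root hα hroot).symm)

end IsMinimalPair

/-- For positive algebraic non-natural `α` with atoms of `N₀[α]` being the powers of `α`
and minimal pair `(p, q)`: `p(1) ≠ q(1)`, each `βₙ = p(α)ⁿ` has factorizations of lengths
`p(1)ⁿ` and `q(1)ⁿ`, and hence `ρ(N₀[α]) ≥ (q(1)/p(1))ⁿ` when `q(1) > p(1)`. -/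
theorem stmt8 (α : ℝ) (h0 : 0 < α) (halg : IsAlgebraic ℚ α)
    (hnat : ¬ ∃ n : ℕ, α = n) (p q : Polynomial ℕ) (hpq : IsMinimalPair α p q)
    (hatoms : ∀ n : ℕ, IsAtomOf (Nmon α) (α ^ n)) :
    p.eval 1 ≠ q.eval 1 ∧
    (∀ n : ℕ, 0 < n →
      (p.eval 1) ^ n ∈ LSet (Nmon α) ((pev α p) ^ n) ∧
      (q.eval 1) ^ n ∈ LSet (Nmon α) ((pev α p) ^ n)) ∧
    (q.eval 1 > p.eval 1 → ∀ n : ℕ, 0 < n →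
      ∃ x ∈ Nmon α, x ≠ 0 ∧ ∃ l L : ℕ, l ∈ LSet (Nmon α) x ∧ L ∈ LSet (Nmon α) x ∧
        (((q.eval 1 : ℕ) : ℝ) / ((p.eval 1 : ℕ) : ℝ)) ^ n * l ≤ L) := by
  have hα : IsIntegral ℚ α := halg.isIntegral
  have hp0 : p ≠ 0 := hpq.left_ne_zero h0 hα
  have lengths : ∀ n : ℕ, (p.eval 1) ^ n ∈ LSet (Nmon α) ((pev α p) ^ n) ∧
      (q.eval 1) ^ n ∈ LSet (Nmon α) ((pev α p) ^ n) := fun n => by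
    refine ⟨?_, hpq.pev_eq ▸ ?_⟩
    · simpa only [eval_pow, pev_pow] using eval_one_mem_LSet α (p ^ n) hatoms
    · simpa only [eval_pow, pev_pow] using eval_one_mem_LSet α (q ^ n) hatoms
  refine ⟨hpq.eval_one_ne hα fun h1 => hnat ⟨1, by simp [h1]⟩, fun n _ => lengths n,
    fun _ n _ => ?_⟩
  refine ⟨pev α p ^ n, pev_pow α p n ▸ pev_mem_Nmon α _, pow_ne_zero n (pev_pos h0 hp0).ne',
    _, _, (lengths n).1, (lengths n).2, le_of_eq ?_⟩
  have hp1 : ((p.eval 1 : ℕ) : ℝ) ≠ 0 := Nat.cast_ne_zero.2 (eval_one_pos hp0).ne'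
  push_cast
  rw [div_pow, div_mul_cancel₀ _ (pow_ne_zero n hp1)]
end

section
/- Let α be a positive algebraic number with minimal polynomial m_α of degree n and minimal pair (p(X), q(X)). If the atoms of N₀[α] are exactly 1, α, α², …, αⁿ (i.e., |A(N₀[α])| = deg m_α + 1), then the elasticity of N₀[α] equals max{p(1)/q(1), q(1)/p(1)}. -/
open Polynomial

/-- The set of ratios of factorization lengths; its supremum is the elasticity `ρ(M)`. -/
def RatioSet (M : AddSubmonoid ℝ) : Set ℝ :=
  {r | ∃ x ∈ M, x ≠ 0 ∧ ∃ l L : ℕ, l ∈ LSet M x ∧ L ∈ LSet M x ∧ r = (L : ℝ) / (l : ℝ)}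

/- ### Auxiliary lemmas -/

lemma eval_one_eq (p : Polynomial ℕ) : p.eval 1 = ∑ k ∈ p.support, p.coeff k := by
  rw [eval_eq_sum]; simp [Polynomial.sum]

lemma eval_one_pos_s10 (p : Polynomial ℕ) (hp : p ≠ 0) : 0 < p.eval 1 := by
  rw [eval_one_eq]
  obtain ⟨k, hk⟩ := Polynomial.support_nonempty.2 hp
  exact Finset.sum_pos' (fun _ _ => Nat.zero_le _)
    ⟨k, hk, Nat.pos_of_ne_zero (Polynomial.mem_support_iff.1 hk)⟩

lemma aeval_natmap (α : ℝ) (f : Polynomial ℕ) :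
    aeval α (f.map (Nat.castRingHom ℚ)) = (f.map (Nat.castRingHom ℝ)).eval α := by
  rw [aeval_def, eval₂_eq_eval_map, Polynomial.map_map,
    Subsingleton.elim ((algebraMap ℚ ℝ).comp (Nat.castRingHom ℚ)) (Nat.castRingHom ℝ)]

lemma natmap_eval_pos (α : ℝ) (h0 : 0 < α) (f : Polynomial ℕ) (hf : f ≠ 0) :
    0 < (f.map (Nat.castRingHom ℝ)).eval α := by
  rw [eval_map, eval₂_eq_sum, Polynomial.sum]
  apply Finset.sum_pos
  · intro k hk
    have h1 : 0 < f.coeff k := Nat.pos_of_ne_zero (Polynomial.mem_support_iff.1 hk)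
    have h2 : (0:ℝ) < (f.coeff k : ℝ) := by exact_mod_cast h1
    have : (0:ℝ) < α ^ k := pow_pos h0 k
    show 0 < (Nat.castRingHom ℝ) (f.coeff k) * α ^ k
    exact mul_pos h2 this
  · exact Polynomial.support_nonempty.2 hf

lemma core_ineq (p q f g : Polynomial ℕ) (ℓ : ℕ) (hℓ : 0 < ℓ) (c : ℚ) (hc : 0 ≤ c)
    (hdisj : ∀ n : ℕ, p.coeff n = 0 ∨ q.coeff n = 0)
    (heq : ∀ k : ℕ, (ℓ : ℚ) * ((f.coeff k : ℚ) - (g.coeff k : ℚ))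
        = c * ((p.coeff k : ℚ) - (q.coeff k : ℚ))) :
    f.eval 1 * q.eval 1 ≤ g.eval 1 * p.eval 1 ∨ f.eval 1 * p.eval 1 ≤ g.eval 1 * q.eval 1 := by
  classical
  have hℓ' : (0:ℚ) < (ℓ:ℚ) := by exact_mod_cast hℓ
  have hbig : (ℓ : ℚ) * (((f.eval 1 : ℕ) : ℚ) - ((g.eval 1 : ℕ) : ℚ))
      = c * (((p.eval 1 : ℕ) : ℚ) - ((q.eval 1 : ℕ) : ℚ)) := by
    set T := f.support ∪ g.support ∪ p.support ∪ q.support with hTdef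
    have hsum : ∀ (h : Polynomial ℕ), h.support ⊆ T →
        ((h.eval 1 : ℕ) : ℚ) = ∑ k ∈ T, (h.coeff k : ℚ) := by
      intro h hsub
      rw [eval_one_eq, Nat.cast_sum]
      exact Finset.sum_subset hsub (fun k _ hk => by
        simp [Polynomial.notMem_support_iff.1 hk])
    have h1 := hsum f (((Finset.subset_union_left).trans
      Finset.subset_union_left).trans Finset.subset_union_left)
    have h2 := hsum g (((Finset.subset_union_right).trans
      Finset.subset_union_left).trans Finset.subset_union_left)
    have h3 := hsum p ((Finset.subset_union_right).trans Finset.subset_union_left)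
    have h4 := hsum q Finset.subset_union_right
    rw [h1, h2, h3, h4, mul_sub, mul_sub, Finset.mul_sum, Finset.mul_sum,
      Finset.mul_sum, Finset.mul_sum, ← Finset.sum_sub_distrib, ← Finset.sum_sub_distrib]
    exact Finset.sum_congr rfl (fun k _ => by rw [← mul_sub, ← mul_sub]; exact heq k)
  have hcQ : c * ((q.eval 1 : ℕ) : ℚ) ≤ (ℓ : ℚ) * ((g.eval 1 : ℕ) : ℚ) := by
    have step : ∀ k ∈ q.support, c * (q.coeff k : ℚ) ≤ (ℓ : ℚ) * (g.coeff k : ℚ) := by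
      intro k hk
      have hp0 : p.coeff k = 0 := by
        rcases hdisj k with h | h
        · exact h
        · exact absurd h (Polynomial.mem_support_iff.1 hk)
      have hk2 := heq k
      rw [hp0] at hk2
      push_cast at hk2
      have hf0 : (0:ℚ) ≤ f.coeff k := by positivity
      nlinarith [hk2]
    calc c * ((q.eval 1 : ℕ) : ℚ) = ∑ k ∈ q.support, c * (q.coeff k : ℚ) := by
          rw [← Finset.mul_sum, eval_one_eq]; push_cast; ring
      _ ≤ ∑ k ∈ q.support, (ℓ : ℚ) * (g.coeff k : ℚ) := Finset.sum_le_sum step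
      _ ≤ ∑ k ∈ q.support ∪ g.support, (ℓ : ℚ) * (g.coeff k : ℚ) := by
          apply Finset.sum_le_sum_of_subset_of_nonneg Finset.subset_union_left
          intro k _ _; positivity
      _ = ∑ k ∈ g.support, (ℓ : ℚ) * (g.coeff k : ℚ) := by
          refine (Finset.sum_subset Finset.subset_union_right ?_).symm
          intro k _ hk; simp [Polynomial.notMem_support_iff.1 hk]
      _ = (ℓ : ℚ) * ((g.eval 1 : ℕ) : ℚ) := by
          rw [← Finset.mul_sum, eval_one_eq]; push_cast; ring
  rcases le_total (p.eval 1) (q.eval 1) with hPQ | hQP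
  · right
    have hQP' : ((p.eval 1 : ℕ) : ℚ) ≤ ((q.eval 1 : ℕ) : ℚ) := by exact_mod_cast hPQ
    have hprod : c * (((p.eval 1 : ℕ) : ℚ) - (q.eval 1 : ℕ)) ≤ 0 :=
      mul_nonpos_of_nonneg_of_nonpos hc (sub_nonpos.2 hQP')
    have hLl : ((f.eval 1 : ℕ) : ℚ) ≤ ((g.eval 1 : ℕ) : ℚ) := by nlinarith [hbig]
    have : f.eval 1 ≤ g.eval 1 := by exact_mod_cast hLl
    exact Nat.mul_le_mul this hPQ
  · left
    have hQP' : ((q.eval 1 : ℕ) : ℚ) ≤ ((p.eval 1 : ℕ) : ℚ) := by exact_mod_cast hQP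
    have key : (ℓ : ℚ) * (((f.eval 1 : ℕ) : ℚ) * (q.eval 1 : ℕ))
        ≤ (ℓ : ℚ) * (((g.eval 1 : ℕ) : ℚ) * (p.eval 1 : ℕ)) := by
      nlinarith [mul_le_mul_of_nonneg_right hcQ (sub_nonneg.2 hQP'), hbig]
    have : ((f.eval 1 : ℕ) : ℚ) * (q.eval 1 : ℕ) ≤ ((g.eval 1 : ℕ) : ℚ) * (p.eval 1 : ℕ) :=
      le_of_mul_le_mul_left key hℓ'
    exact_mod_cast this

lemma extract_poly (α : ℝ) (n L : ℕ) (x : ℝ) (hL : L ∈ LSet (Nmon α) x)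
    (hatoms : ∀ a : ℝ, IsAtomOf (Nmon α) a → ∃ k ≤ n, a = α ^ k) :
    ∃ f : Polynomial ℕ, f.natDegree ≤ n ∧ f.eval 1 = L ∧
      (f.map (Nat.castRingHom ℝ)).eval α = x := by
  classical
  obtain ⟨S, hS, hsum, hcard⟩ := hL
  set e : ℝ → ℕ := fun a => if h : ∃ k ≤ n, a = α ^ k then h.choose else 0 with he
  have hespec : ∀ a ∈ S, e a ≤ n ∧ a = α ^ (e a) := by
    intro a ha
    have h := hatoms a (hS a ha)
    rw [he]
    simp only [dif_pos h]
    exact ⟨h.choose_spec.1, h.choose_spec.2⟩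
  set S' : Multiset ℕ := S.map e with hS'
  have hsub : S'.toFinset ⊆ Finset.range (n + 1) := by
    intro k hk
    rw [Multiset.mem_toFinset, hS'] at hk
    obtain ⟨a, ha, rfl⟩ := Multiset.mem_map.1 hk
    exact Finset.mem_range.2 (Nat.lt_succ_of_le (hespec a ha).1)
  refine ⟨∑ k ∈ Finset.range (n + 1), C (S'.count k) * X ^ k, ?_, ?_, ?_⟩
  · exact natDegree_sum_le_of_forall_le _ _ (fun k hk =>
      (natDegree_C_mul_le _ _).trans (by
        rw [natDegree_X_pow]; exact Nat.lt_succ_iff.1 (Finset.mem_range.1 hk)))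
  · rw [eval_finset_sum]
    simp only [eval_mul, eval_C, eval_pow, eval_X, one_pow, mul_one]
    rw [← Finset.sum_subset hsub (fun k _ hk => Multiset.count_eq_zero_of_notMem
        (fun h => hk (Multiset.mem_toFinset.2 h)))]
    rw [Multiset.toFinset_sum_count_eq, hS', Multiset.card_map, hcard]
  · rw [eval_map, ← hsum]
    rw [Polynomial.eval₂_finset_sum]
    simp only [eval₂_mul, eval₂_C, eval₂_X_pow, Nat.castRingHom, RingHom.coe_mk]
    have hx : S.sum = (S'.map (fun k => α ^ k)).sum := by
      rw [hS', Multiset.map_map]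
      congr 1
      exact (Multiset.map_congr rfl (fun a ha => (hespec a ha).2)).symm
        |>.trans (Multiset.map_id S) |>.symm
    rw [hx, Finset.sum_multiset_map_count,
      Finset.sum_subset hsub (fun k _ hk => by
        rw [Multiset.count_eq_zero_of_notMem (fun h => hk (Multiset.mem_toFinset.2 h)),
          zero_smul])]
    exact (Finset.sum_congr rfl (fun k _ => by rw [nsmul_eq_mul]; rfl)).symm

lemma construct_len (α : ℝ) (n : ℕ) (f : Polynomial ℕ) (hf : f.natDegree ≤ n)
    (hatom : ∀ k, k ≤ n → IsAtomOf (Nmon α) (α ^ k)) :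
    f.eval 1 ∈ LSet (Nmon α) ((f.map (Nat.castRingHom ℝ)).eval α) := by
  classical
  refine ⟨f.support.val.bind (fun k => Multiset.replicate (f.coeff k) (α ^ k)), ?_, ?_, ?_⟩
  · intro a ha
    rw [Multiset.mem_bind] at ha
    obtain ⟨k, hk, ha⟩ := ha
    rw [Multiset.eq_of_mem_replicate ha]
    exact hatom k ((Polynomial.le_natDegree_of_mem_supp k hk).trans hf)
  · rw [Multiset.sum_bind, eval_map, eval₂_eq_sum]
    show ∑ k ∈ f.support, (Multiset.replicate (f.coeff k) (α ^ k)).sum = _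
    rw [Polynomial.sum]
    refine Finset.sum_congr rfl (fun k _ => ?_)
    rw [Multiset.sum_replicate, nsmul_eq_mul]
    rfl
  · rw [Multiset.card_bind]
    show ∑ k ∈ f.support, Multiset.card (Multiset.replicate (f.coeff k) (α ^ k)) = _
    simp only [Multiset.card_replicate]
    exact (eval_one_eq f).symm

lemma ratio_le_max (L l P Q : ℕ) (hl : 0 < l) (hP : 0 < P) (hQ : 0 < Q)
    (h : L * Q ≤ l * P ∨ L * P ≤ l * Q) :
    (L : ℝ) / l ≤ max ((P : ℝ) / Q) ((Q : ℝ) / P) := by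
  have hl' : (0:ℝ) < l := by exact_mod_cast hl
  have hP' : (0:ℝ) < P := by exact_mod_cast hP
  have hQ' : (0:ℝ) < Q := by exact_mod_cast hQ
  rcases h with h | h
  · refine le_max_of_le_left ((div_le_div_iff₀ hl' hQ').2 ?_)
    have : (L:ℝ) * Q ≤ (l:ℝ) * P := by exact_mod_cast h
    nlinarith
  · refine le_max_of_le_right ((div_le_div_iff₀ hl' hP').2 ?_)
    have : (L:ℝ) * P ≤ (l:ℝ) * Q := by exact_mod_cast h
    nlinarith

/-- For positive algebraic `α` with minimal pair `(p, q)`, if the atoms of `N₀[α]` are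
exactly `1, α, …, αⁿ` with `n = deg m_α`, then `ρ(N₀[α]) = max{p(1)/q(1), q(1)/p(1)}`. -/
theorem stmt10 (α : ℝ) (h0 : 0 < α) (halg : IsAlgebraic ℚ α)
    (p q : Polynomial ℕ) (hpq : IsMinimalPair α p q)
    (hatoms : ∀ a : ℝ, IsAtomOf (Nmon α) a ↔ ∃ k ≤ (minpoly ℚ α).natDegree, a = α ^ k) :
    IsLUB (RatioSet (Nmon α))
      (max (((p.eval 1 : ℕ) : ℝ) / ((q.eval 1 : ℕ) : ℝ))
           (((q.eval 1 : ℕ) : ℝ) / ((p.eval 1 : ℕ) : ℝ))) := by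
  classical
  obtain ⟨hdisj, ℓ, hℓ, hlm, -⟩ := hpq
  set m := minpoly ℚ α with hm
  set n := m.natDegree with hn
  have hint : IsIntegral ℚ α := halg.isIntegral
  have hmonic : m.Monic := minpoly.monic hint
  have hm0 : m ≠ 0 := hmonic.ne_zero
  have hatomfwd : ∀ a : ℝ, IsAtomOf (Nmon α) a → ∃ k ≤ n, a = α ^ k :=
    fun a ha => (hatoms a).1 ha
  have hatomrev : ∀ k, k ≤ n → IsAtomOf (Nmon α) (α ^ k) :=
    fun k hk => (hatoms _).2 ⟨k, hk, rfl⟩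
  -- coefficient identity for the minimal pair
  have hcoeff : ∀ k : ℕ, (p.coeff k : ℚ) - (q.coeff k : ℚ) = (ℓ : ℚ) * m.coeff k := by
    intro k
    have h := congrArg (fun P : Polynomial ℚ => P.coeff k) hlm
    simpa [coeff_smul, smul_eq_mul, coeff_map] using h.symm
  -- p ≠ 0
  have hpn : (p.coeff n : ℚ) = (ℓ : ℚ) := by
    have h := hcoeff n
    rw [hmonic.coeff_natDegree, mul_one] at h
    rcases hdisj n with h0 | h0
    · exfalso
      rw [h0] at h
      have h1 : (0:ℚ) ≤ (q.coeff n : ℚ) := by positivity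
      have h2 : (0:ℚ) < (ℓ:ℚ) := by exact_mod_cast hℓ
      push_cast at h
      linarith
    · rw [h0] at h
      push_cast at h
      linarith
  have hp0 : p ≠ 0 := by
    intro h
    rw [h] at hpn
    simp at hpn
    have : (0:ℚ) < (ℓ:ℚ) := by exact_mod_cast hℓ
    rw [← hpn] at this
    exact lt_irrefl _ this
  -- degrees of p and q
  have hboth : ∀ N, n < N → p.coeff N = 0 ∧ q.coeff N = 0 := by
    intro N hN
    have h := hcoeff N
    rw [Polynomial.coeff_eq_zero_of_natDegree_lt hN, mul_zero] at h
    have h' : (p.coeff N : ℚ) = (q.coeff N : ℚ) := by linarith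
    have h'' : p.coeff N = q.coeff N := by exact_mod_cast h'
    rcases hdisj N with h0 | h0
    · exact ⟨h0, by rw [← h'', h0]⟩
    · exact ⟨by rw [h'', h0], h0⟩
  have hdegp : p.natDegree ≤ n :=
    natDegree_le_iff_coeff_eq_zero.2 (fun N hN => (hboth N hN).1)
  have hdegq : q.natDegree ≤ n :=
    natDegree_le_iff_coeff_eq_zero.2 (fun N hN => (hboth N hN).2)
  -- p(α) = q(α) over ℝ
  have hpq_eval : (p.map (Nat.castRingHom ℝ)).eval α = (q.map (Nat.castRingHom ℝ)).eval α := by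
    have h := congrArg (aeval α) hlm
    rw [map_sub, aeval_natmap, aeval_natmap, map_smul, minpoly.aeval, smul_zero] at h
    linarith [sub_eq_zero.1 h.symm]
  set x : ℝ := (p.map (Nat.castRingHom ℝ)).eval α with hx
  have hxpos : 0 < x := natmap_eval_pos α h0 p hp0
  have hxne : x ≠ 0 := ne_of_gt hxpos
  -- q ≠ 0
  have hq0 : q ≠ 0 := by
    intro h
    rw [h] at hpq_eval
    simp at hpq_eval
    exact hxne hpq_eval
  have hP : 0 < p.eval 1 := eval_one_pos_s10 p hp0
  have hQ : 0 < q.eval 1 := eval_one_pos_s10 q hq0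
  -- the two canonical factorizations
  have hPL : p.eval 1 ∈ LSet (Nmon α) x := construct_len α n p hdegp hatomrev
  have hQL : q.eval 1 ∈ LSet (Nmon α) x := by
    have h := construct_len α n q hdegq hatomrev
    rwa [← hpq_eval] at h
  have hxmem : x ∈ Nmon α := by
    obtain ⟨S, hS, hsum, -⟩ := hPL
    rw [← hsum]
    exact AddSubmonoid.multiset_sum_mem _ S (fun a ha => (hS a ha).1)
  -- membership of the max in the ratio set
  have hmem : max (((p.eval 1 : ℕ) : ℝ) / ((q.eval 1 : ℕ) : ℝ))
      (((q.eval 1 : ℕ) : ℝ) / ((p.eval 1 : ℕ) : ℝ)) ∈ RatioSet (Nmon α) := by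
    have hP' : (0:ℝ) < ((p.eval 1 : ℕ) : ℝ) := by exact_mod_cast hP
    have hQ' : (0:ℝ) < ((q.eval 1 : ℕ) : ℝ) := by exact_mod_cast hQ
    rcases le_total (q.eval 1) (p.eval 1) with h | h
    · have h' : ((q.eval 1 : ℕ) : ℝ) ≤ ((p.eval 1 : ℕ) : ℝ) := by exact_mod_cast h
      have hmax : max (((p.eval 1 : ℕ) : ℝ) / ((q.eval 1 : ℕ) : ℝ))
          (((q.eval 1 : ℕ) : ℝ) / ((p.eval 1 : ℕ) : ℝ))
          = ((p.eval 1 : ℕ) : ℝ) / ((q.eval 1 : ℕ) : ℝ) :=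
        max_eq_left ((div_le_div_iff₀ hP' hQ').2 (by nlinarith))
      exact ⟨x, hxmem, hxne, q.eval 1, p.eval 1, hQL, hPL, hmax⟩
    · have h' : ((p.eval 1 : ℕ) : ℝ) ≤ ((q.eval 1 : ℕ) : ℝ) := by exact_mod_cast h
      have hmax : max (((p.eval 1 : ℕ) : ℝ) / ((q.eval 1 : ℕ) : ℝ))
          (((q.eval 1 : ℕ) : ℝ) / ((p.eval 1 : ℕ) : ℝ))
          = ((q.eval 1 : ℕ) : ℝ) / ((p.eval 1 : ℕ) : ℝ) :=
        max_eq_right ((div_le_div_iff₀ hQ' hP').2 (by nlinarith))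
      exact ⟨x, hxmem, hxne, p.eval 1, q.eval 1, hPL, hQL, hmax⟩
  -- upper bound
  have hub : ∀ r ∈ RatioSet (Nmon α), r ≤ max (((p.eval 1 : ℕ) : ℝ) / ((q.eval 1 : ℕ) : ℝ))
      (((q.eval 1 : ℕ) : ℝ) / ((p.eval 1 : ℕ) : ℝ)) := by
    rintro r ⟨y, hymem, hyne, l, L, hl, hL, rfl⟩
    obtain ⟨g, hgdeg, hgeval, hgE⟩ := extract_poly α n l y hl hatomfwd
    obtain ⟨f, hfdeg, hfeval, hfE⟩ := extract_poly α n L y hL hatomfwd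
    have hgne : g ≠ 0 := by
      intro h
      rw [h] at hgE
      simp at hgE
      exact hyne hgE.symm
    have hlpos : 0 < l := hgeval ▸ eval_one_pos_s10 g hgne
    -- divisibility argument
    have hFroot : aeval α (f.map (Nat.castRingHom ℚ) - g.map (Nat.castRingHom ℚ)) = 0 := by
      rw [map_sub, aeval_natmap, aeval_natmap, hfE, hgE, sub_self]
    obtain ⟨h, hF⟩ := minpoly.dvd ℚ α hFroot
    have hkey : ∃ c : ℚ, ∀ k, (ℓ:ℚ) * ((f.coeff k : ℚ) - (g.coeff k : ℚ))
        = c * ((p.coeff k : ℚ) - (q.coeff k : ℚ)) := by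
      by_cases hF0 : f.map (Nat.castRingHom ℚ) - g.map (Nat.castRingHom ℚ) = 0
      · refine ⟨0, fun k => ?_⟩
        have h2 := congrArg (fun P : Polynomial ℚ => P.coeff k) hF0
        simp only [coeff_sub, coeff_map, coeff_zero, eq_natCast] at h2
        rw [h2, mul_zero, zero_mul]
      · have hne : h ≠ 0 := by
          intro hh
          rw [hh, mul_zero] at hF
          exact hF0 hF
        have hFdeg : (f.map (Nat.castRingHom ℚ) - g.map (Nat.castRingHom ℚ)).natDegree ≤ n :=
          (natDegree_sub_le _ _).trans (max_le ((natDegree_map_le).trans hfdeg)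
            ((natDegree_map_le).trans hgdeg))
        have hdeg0 : h.natDegree = 0 := by
          have := hF ▸ hFdeg
          rw [natDegree_mul hm0 hne] at this
          omega
        have hhc : h = C (h.coeff 0) := eq_C_of_natDegree_le_zero hdeg0.le
        refine ⟨h.coeff 0, fun k => ?_⟩
        have e1 := congrArg (fun P : Polynomial ℚ => P.coeff k) hF
        simp only [coeff_sub, coeff_map, eq_natCast] at e1
        rw [hhc, mul_comm, coeff_C_mul] at e1
        rw [e1, hcoeff k]
        ring
    obtain ⟨c, hc⟩ := hkey
    have hdisj' : ∀ k : ℕ, q.coeff k = 0 ∨ p.coeff k = 0 := fun k => (hdisj k).symm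
    have hcases : f.eval 1 * q.eval 1 ≤ g.eval 1 * p.eval 1
        ∨ f.eval 1 * p.eval 1 ≤ g.eval 1 * q.eval 1 := by
      rcases le_or_gt 0 c with hc0 | hc0
      · exact core_ineq p q f g ℓ hℓ c hc0 hdisj hc
      · exact (core_ineq q p f g ℓ hℓ (-c) (by linarith) hdisj'
          (fun k => by rw [hc k]; ring)).symm
    rw [← hfeval, ← hgeval]
    exact ratio_le_max (f.eval 1) (g.eval 1) (p.eval 1) (q.eval 1)
      (hgeval ▸ hlpos) hP hQ hcases
  exact ⟨hub, fun b hb => hb hmem⟩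
end

section
/- Let α be a positive algebraic number with α ≠ 1 and minimal pair (p, q). If f, g ∈ ℕ₀[X] are nonzero polynomials with f(α) = g(α) that share no monomial of the same degree, then there is a positive integer c such that {f, g} = {c·p, c·q} (up to swapping f and g); in particular f(1)/g(1) ∈ {p(1)/q(1), q(1)/p(1)}. -/
open Polynomial

private lemma den_sub_nat (a b : ℕ) : ((a : ℚ) - b).den = 1 := by
  have h : ((a : ℚ) - b) = (((a : ℤ) - b : ℤ) : ℚ) := by push_cast; ring
  rw [h]; exact Rat.den_intCast _

private lemma div_aux (m : Polynomial ℚ) (ℓ a : ℕ) (hℓ : 0 < ℓ)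
    (hmin : ∀ mm : ℕ, 0 < mm → (∀ n, ((mm : ℚ) * m.coeff n).den = 1) → ℓ ≤ mm)
    (hdℓ : ∀ n, ((ℓ : ℚ) * m.coeff n).den = 1)
    (hda : ∀ n, ((a : ℚ) * m.coeff n).den = 1) : ℓ ∣ a := by
  by_contra hnd
  have ht0 : a % ℓ ≠ 0 := fun h => hnd (Nat.dvd_of_mod_eq_zero h)
  have htlt : a % ℓ < ℓ := Nat.mod_lt _ hℓ
  have hdt : ∀ n, (((a % ℓ : ℕ) : ℚ) * m.coeff n).den = 1 := by
    intro n
    have hz1 : ((((a : ℚ) * m.coeff n).num : ℚ)) = (a : ℚ) * m.coeff n :=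
      (Rat.den_eq_one_iff _).mp (hda n)
    have hz2 : ((((ℓ : ℚ) * m.coeff n).num : ℚ)) = (ℓ : ℚ) * m.coeff n :=
      (Rat.den_eq_one_iff _).mp (hdℓ n)
    have key : ((a % ℓ : ℕ) : ℚ) = (a : ℚ) - (a / ℓ : ℕ) * (ℓ : ℕ) := by
      have h1 : ((a % ℓ + a / ℓ * ℓ : ℕ) : ℚ) = (a : ℚ) := by
        exact_mod_cast congrArg (Nat.cast : ℕ → ℚ) (Nat.mod_add_div' a ℓ)
      push_cast at h1
      linarith
    have h2 : ((a % ℓ : ℕ) : ℚ) * m.coeff n =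
        ((((a : ℚ) * m.coeff n).num - (a / ℓ : ℕ) * ((ℓ : ℚ) * m.coeff n).num : ℤ) : ℚ) := by
      have hc : ((((a : ℚ) * m.coeff n).num - (a / ℓ : ℕ) * ((ℓ : ℚ) * m.coeff n).num : ℤ) : ℚ)
          = ((((a : ℚ) * m.coeff n).num : ℚ)) - ((a / ℓ : ℕ) : ℚ) * ((((ℓ : ℚ) * m.coeff n).num : ℚ)) := by
        rw [Int.cast_sub, Int.cast_mul, Int.cast_natCast]
      rw [hc, hz1, hz2, key]; ring
    rw [h2]; exact Rat.den_intCast _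
  have := hmin _ (Nat.pos_of_ne_zero ht0) hdt
  omega

private lemma nat_cases (c a b P Q : ℕ) (h1 : P = 0 ∨ Q = 0) (h2 : a = 0 ∨ b = 0)
    (h : a + c * Q = c * P + b) : a = c * P ∧ b = c * Q := by
  obtain ⟨u, hu⟩ : ∃ u, c * P = u := ⟨_, rfl⟩
  obtain ⟨v, hv⟩ : ∃ v, c * Q = v := ⟨_, rfl⟩
  have hP : P = 0 → u = 0 := by rintro rfl; omega
  have hQ : Q = 0 → v = 0 := by rintro rfl; omega
  rw [hu, hv] at h ⊢
  rcases h1.imp hP hQ with h1 | h1 <;> rcases h2 with h2 | h2 <;> omega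

private lemma aux_decomp (c : ℕ) (p q f g : Polynomial ℕ)
    (hpq : ∀ n, p.coeff n = 0 ∨ q.coeff n = 0)
    (hfg : ∀ n, f.coeff n = 0 ∨ g.coeff n = 0)
    (h : f.map (Nat.castRingHom ℚ) - g.map (Nat.castRingHom ℚ)
       = (c : ℚ) • (p.map (Nat.castRingHom ℚ) - q.map (Nat.castRingHom ℚ))) :
    f = c • p ∧ g = c • q := by
  have key : ∀ n, f.coeff n + c * q.coeff n = c * p.coeff n + g.coeff n := by
    intro n
    have h' := congrArg (fun r => Polynomial.coeff r n) h
    simp only [coeff_sub, coeff_smul, coeff_map, smul_eq_mul, mul_sub, eq_natCast] at h'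
    have : ((f.coeff n + c * q.coeff n : ℕ) : ℚ) = ((c * p.coeff n + g.coeff n : ℕ) : ℚ) := by
      push_cast
      push_cast at h'
      linarith
    exact_mod_cast this
  constructor <;> ext n <;>
    simp only [coeff_smul, smul_eq_mul] <;>
    [exact (nat_cases c (f.coeff n) (g.coeff n) (p.coeff n) (q.coeff n) (hpq n) (hfg n) (key n)).1;
     exact (nat_cases c (f.coeff n) (g.coeff n) (p.coeff n) (q.coeff n) (hpq n) (hfg n) (key n)).2]

private lemma master (m : Polynomial ℚ) (ℓ : ℕ) (hℓ : 0 < ℓ) (p q f g : Polynomial ℕ)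
    (hpqd : ∀ n, p.coeff n = 0 ∨ q.coeff n = 0)
    (hfgd : ∀ n, f.coeff n = 0 ∨ g.coeff n = 0)
    (hPQ : (ℓ : ℚ) • m = p.map (Nat.castRingHom ℚ) - q.map (Nat.castRingHom ℚ))
    (hmin : ∀ mm : ℕ, 0 < mm → (∀ n, ((mm : ℚ) * m.coeff n).den = 1) → ℓ ≤ mm)
    (a : ℕ) (ha : 0 < a)
    (hF : f.map (Nat.castRingHom ℚ) - g.map (Nat.castRingHom ℚ) = (a : ℚ) • m) :
    ∃ c : ℕ, 0 < c ∧ f = c • p ∧ g = c • q := by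
  have hda : ∀ n, ((a : ℚ) * m.coeff n).den = 1 := by
    intro n
    have h' := congrArg (fun r => Polynomial.coeff r n) hF.symm
    simp only [coeff_sub, coeff_smul, coeff_map, smul_eq_mul, eq_natCast] at h'
    rw [h']
    exact den_sub_nat _ _
  have hdℓ : ∀ n, ((ℓ : ℚ) * m.coeff n).den = 1 := by
    intro n
    have h' := congrArg (fun r => Polynomial.coeff r n) hPQ
    simp only [coeff_sub, coeff_smul, coeff_map, smul_eq_mul, eq_natCast] at h'
    rw [h']
    exact den_sub_nat _ _
  have hdvd : ℓ ∣ a := div_aux m ℓ a hℓ hmin hdℓ hda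
  obtain ⟨c, rfl⟩ := hdvd
  have hc : 0 < c := Nat.pos_of_ne_zero fun h => by subst h; simp at ha
  refine ⟨c, hc, aux_decomp c p q f g hpqd hfgd ?_⟩
  rw [← hPQ, hF, smul_smul]
  congr 1
  push_cast
  ring

/-- Let `α > 0` be algebraic with `α ≠ 1` and minimal pair `(p, q)`. If `f, g ∈ ℕ₀[X]` are
nonzero, `f(α) = g(α)`, they share no monomial of the same degree, and their degrees are at
most `deg m_α`, then `{f, g} = {c·p, c·q}` for some `c ∈ ℕ`, `c > 0`; in particular
`f(1)/g(1) ∈ {p(1)/q(1), q(1)/p(1)}`. -/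
theorem stmt11 (α : ℝ) (h0 : 0 < α) (hne : α ≠ 1) (halg : IsAlgebraic ℚ α)
    (p q : Polynomial ℕ) (hpq : IsMinimalPair α p q)
    (f g : Polynomial ℕ) (hf : f ≠ 0) (hg : g ≠ 0) (heq : pev α f = pev α g)
    (hdisj : ∀ n : ℕ, f.coeff n = 0 ∨ g.coeff n = 0)
    (hdf : f.natDegree ≤ (minpoly ℚ α).natDegree)
    (hdg : g.natDegree ≤ (minpoly ℚ α).natDegree) :
    (∃ c : ℕ, 0 < c ∧ ((f = c • p ∧ g = c • q) ∨ (f = c • q ∧ g = c • p))) ∧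
    (((f.eval 1 : ℕ) : ℝ) / ((g.eval 1 : ℕ) : ℝ) = ((p.eval 1 : ℕ) : ℝ) / ((q.eval 1 : ℕ) : ℝ) ∨
     ((f.eval 1 : ℕ) : ℝ) / ((g.eval 1 : ℕ) : ℝ) = ((q.eval 1 : ℕ) : ℝ) / ((p.eval 1 : ℕ) : ℝ)) := by
  obtain ⟨hpqdisj, ℓ, hℓ, hPQ, hmin⟩ := hpq
  set m := minpoly ℚ α with hm
  have hint : IsIntegral ℚ α := halg.isIntegral
  have hm0 : m ≠ 0 := minpoly.ne_zero hint
  have hmon : m.Monic := minpoly.monic hint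
  set φ := Nat.castRingHom ℚ with hφ
  have haev : ∀ h : Polynomial ℕ, Polynomial.aeval α (h.map φ) = pev α h := by
    intro h
    have hcomp : (algebraMap ℚ ℝ).comp φ = Nat.castRingHom ℝ := by
      ext n; simp
    rw [Polynomial.aeval_def, Polynomial.eval₂_map, hcomp]
    rfl
  set F := f.map φ - g.map φ with hFdef
  have hFα : Polynomial.aeval α F = 0 := by
    rw [hFdef, map_sub, haev, haev, heq, sub_self]
  have hF0 : F ≠ 0 := by
    intro h
    have h2 : f.map φ = g.map φ := by rwa [hFdef, sub_eq_zero] at h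
    have hfg2 : f = g := by
      exact Polynomial.map_injective φ Nat.cast_injective h2
    apply hf
    ext n
    rcases hdisj n with h' | h'
    · simpa using h'
    · rw [hfg2]; simpa using h'
  have hdvd : m ∣ F := minpoly.dvd ℚ α hFα
  obtain ⟨k, hk⟩ := hdvd
  have hk0 : k ≠ 0 := by rintro rfl; rw [mul_zero] at hk; exact hF0 hk
  have hdF : F.natDegree ≤ m.natDegree := by
    refine le_trans (natDegree_sub_le _ _) (max_le ?_ ?_)
    · exact le_trans natDegree_map_le hdf
    · exact le_trans natDegree_map_le hdg
  have hkdeg : k.natDegree = 0 := by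
    have := natDegree_mul hm0 hk0
    rw [← hk] at this
    omega
  obtain ⟨r, rfl⟩ : ∃ r, k = C r := ⟨k.coeff 0, (Polynomial.eq_C_of_natDegree_eq_zero hkdeg)⟩
  have hr0 : r ≠ 0 := by rintro rfl; rw [map_zero, mul_zero] at hk; exact hF0 hk
  set d := m.natDegree with hd
  have hrd : r = (f.coeff d : ℚ) - (g.coeff d : ℚ) := by
    have h1 : F.coeff d = m.coeff d * r := by rw [hk, coeff_mul_C]
    rw [hmon.coeff_natDegree, one_mul] at h1
    rw [← h1, hFdef]
    simp
  have hFsmul : ∀ (s : ℚ), r = s → F = s • m := by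
    rintro s rfl
    rw [hk, smul_eq_C_mul, mul_comm]
  -- main structural result
  have main : ∃ c : ℕ, 0 < c ∧ ((f = c • p ∧ g = c • q) ∨ (f = c • q ∧ g = c • p)) := by
    rcases hdisj d with hfd | hgd
    · -- f.coeff d = 0, so r = -(g.coeff d), use (g, f) with pair (p, q)
      have hb : 0 < g.coeff d := by
        rcases Nat.eq_zero_or_pos (g.coeff d) with h' | h'
        · exfalso; apply hr0; rw [hrd, hfd, h']; simp
        · exact h'
      have hF' : g.map φ - f.map φ = ((g.coeff d : ℕ) : ℚ) • m := by
        have := hFsmul (-(g.coeff d : ℚ)) (by rw [hrd, hfd]; simp)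
        have h2 : g.map φ - f.map φ = -F := by rw [hFdef]; ring
        rw [h2, this, neg_smul, neg_neg]
      obtain ⟨c, hc, hgc, hfc⟩ := master m ℓ hℓ p q g f hpqdisj
        (fun n => (hdisj n).symm) hPQ hmin (g.coeff d) hb hF'
      exact ⟨c, hc, Or.inr ⟨hfc, hgc⟩⟩
    · -- g.coeff d = 0, so r = f.coeff d
      have ha : 0 < f.coeff d := by
        rcases Nat.eq_zero_or_pos (f.coeff d) with h' | h'
        · exfalso; apply hr0; rw [hrd, hgd, h']; simp
        · exact h'
      have hF' : f.map φ - g.map φ = ((f.coeff d : ℕ) : ℚ) • m := by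
        have := hFsmul ((f.coeff d : ℚ)) (by rw [hrd, hgd]; simp)
        exact this
      obtain ⟨c, hc, hfc, hgc⟩ := master m ℓ hℓ p q f g hpqdisj hdisj hPQ hmin
        (f.coeff d) ha hF'
      exact ⟨c, hc, Or.inl ⟨hfc, hgc⟩⟩
  refine ⟨main, ?_⟩
  obtain ⟨c, hc, hcase⟩ := main
  have hcR : ((c : ℕ) : ℝ) ≠ 0 := by exact_mod_cast hc.ne'
  rcases hcase with ⟨h1, h2⟩ | ⟨h1, h2⟩
  · left
    rw [h1, h2]
    have e1 : (c • p).eval 1 = c * p.eval 1 := by simp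
    have e2 : (c • q).eval 1 = c * q.eval 1 := by simp
    rw [e1, e2]
    push_cast
    rw [mul_div_mul_left _ _ hcR]
  · right
    rw [h1, h2]
    have e1 : (c • q).eval 1 = c * q.eval 1 := by simp
    have e2 : (c • p).eval 1 = c * p.eval 1 := by simp
    rw [e1, e2]
    push_cast
    rw [mul_div_mul_left _ _ hcR]
end

section
/- Let α > 1 be an algebraic number that is not an algebraic integer, so that the atoms of N₀[α] are exactly the powers αⁿ. Then for every nonzero β ∈ N₀[α] and all sufficiently large n (namely n > deg f for some f ∈ ℕ₀[X] with f(α) = β, and α^{n+1} > αⁿ + β), the atom αⁿ appears in every factorization of β + αⁿ; consequently L(β + αⁿ) = 1 + L(β) elementwise. -/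
open Polynomial

/-- Lengths of factorizations of `x` in `N₀[α]`, given as polynomials in `ℕ₀[X]`
evaluating to `x`. -/
def LSetP (α : ℝ) (x : ℝ) : Set ℕ :=
  {n | ∃ f : Polynomial ℕ, pev α f = x ∧ f.eval 1 = n}

/-! If `β + αⁿ = g(α)` with `g ∈ ℕ₀[X]` and `αⁿ` did not occur in `g`, then, since
`β + αⁿ < αⁿ⁺¹`, `g` has degree `< n`, and `X^n + f - g` would be a monic integer polynomial
vanishing at `α`. So every factorization of `β + αⁿ` is one of `β` plus the atom `αⁿ`. -/

lemma pev_eq_aeval (α : ℝ) (g : ℕ[X]) : pev α g = aeval α g := by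
  rw [pev, aeval_def, Subsingleton.elim (algebraMap ℕ ℝ) (Nat.castRingHom ℝ)]

lemma pev_add (α : ℝ) (g h : ℕ[X]) : pev α (g + h) = pev α g + pev α h :=
  eval₂_add _ _

lemma pev_X_pow (α : ℝ) (n : ℕ) : pev α (X ^ n) = α ^ n := by
  simp [pev]

lemma coeff_mul_pow_le_pev {α : ℝ} (hα : 0 ≤ α) (g : ℕ[X]) (m : ℕ) :
    (g.coeff m : ℝ) * α ^ m ≤ pev α g := by
  have hterm : ∀ i, 0 ≤ (g.coeff i : ℝ) * α ^ i := fun i => by positivity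
  have hsum : pev α g = ∑ i ∈ g.support, (g.coeff i : ℝ) * α ^ i := by
    simp [pev, eval₂_eq_sum, Polynomial.sum]
  rw [hsum]
  by_cases hm : m ∈ g.support
  · exact Finset.single_le_sum (fun i _ => hterm i) hm
  · rw [notMem_support_iff.mp hm, Nat.cast_zero, zero_mul]
    exact Finset.sum_nonneg fun i _ => hterm i

lemma coeff_eq_zero_of_pev_lt_pow {α : ℝ} (hα : 1 ≤ α) {g : ℕ[X]} {m k : ℕ}
    (hg : pev α g < α ^ m) (hmk : m ≤ k) : g.coeff k = 0 := by
  by_contra hk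
  have hcoeff : (1 : ℝ) ≤ g.coeff k := by exact_mod_cast Nat.one_le_iff_ne_zero.mpr hk
  have : α ^ m ≤ pev α g :=
    calc α ^ m ≤ α ^ k := pow_le_pow_right₀ hα hmk
      _ ≤ (g.coeff k : ℝ) * α ^ k := le_mul_of_one_le_left (by positivity) hcoeff
      _ ≤ pev α g := coeff_mul_pow_le_pev (by positivity) g k
  linarith

lemma isIntegral_of_pev_eq_pev_add_pow {α : ℝ} {f g : ℕ[X]} {n : ℕ}
    (hf : f.degree < n) (hg : g.degree < n) (h : pev α g = pev α f + α ^ n) :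
    IsIntegral ℤ α := by
  set q : ℤ[X] := f.map (algebraMap ℕ ℤ) - g.map (algebraMap ℕ ℤ)
  have hq : q.degree < n :=
    (degree_sub_le _ _).trans_lt (max_lt (degree_map_le.trans_lt hf) (degree_map_le.trans_lt hg))
  refine ⟨X ^ n + q, monic_X_pow_add hq, ?_⟩
  rw [← aeval_def]
  simp only [q, map_add, map_sub, map_pow, aeval_X, aeval_map_algebraMap, ← pev_eq_aeval, h]
  ring

lemma coeff_ne_zero_of_pev_eq_add_pow {α : ℝ} (hα : 1 ≤ α) (hint : ¬ IsIntegral ℤ α)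
    {f g : ℕ[X]} {n : ℕ} (hf : f.natDegree < n) (hbig : α ^ n + pev α f < α ^ (n + 1))
    (hg : pev α g = pev α f + α ^ n) : g.coeff n ≠ 0 := by
  intro hgn
  have hfdeg : f.degree < n := degree_le_natDegree.trans_lt (by exact_mod_cast hf)
  have hgdeg : g.degree < n := by
    refine (degree_lt_iff_coeff_zero g n).mpr fun k hk => ?_
    rcases hk.eq_or_lt with rfl | hlt
    · exact hgn
    · exact coeff_eq_zero_of_pev_lt_pow hα (m := n + 1) (by linarith) hlt
  exact hint (isIntegral_of_pev_eq_pev_add_pow hfdeg hgdeg hg)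

lemma exists_eq_add_X_pow {g : ℕ[X]} {n : ℕ} (hg : g.coeff n ≠ 0) : ∃ g', g = g' + X ^ n := by
  refine ⟨g.erase n + monomial n (g.coeff n - 1), ?_⟩
  rw [X_pow_eq_monomial, add_assoc, ← map_add, Nat.sub_add_cancel (Nat.one_le_iff_ne_zero.mpr hg),
    add_comm, monomial_add_erase]

lemma LSetP_add_pow_eq_image {α x : ℝ} {n : ℕ}
    (hatom : ∀ g : ℕ[X], pev α g = x + α ^ n → g.coeff n ≠ 0) :
    LSetP α (x + α ^ n) = (· + 1) '' LSetP α x := by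
  ext k
  constructor
  · rintro ⟨g, hg, rfl⟩
    obtain ⟨g', rfl⟩ := exists_eq_add_X_pow (hatom g hg)
    rw [pev_add, pev_X_pow, add_left_inj] at hg
    exact ⟨g'.eval 1, ⟨g', hg, rfl⟩, by simp⟩
  · rintro ⟨_, ⟨g, hg, rfl⟩, rfl⟩
    exact ⟨g + X ^ n, by rw [pev_add, pev_X_pow, hg], by simp⟩

theorem stmt12_general (α : ℝ) (h1 : 1 < α) (hint : ¬ IsIntegral ℤ α)
    (β : ℝ)
    (f : Polynomial ℕ) (hf : pev α f = β) (n : ℕ) (hn : f.natDegree < n)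
    (hbig : α ^ n + β < α ^ (n + 1)) :
    (∀ g : Polynomial ℕ, pev α g = β + α ^ n → g.coeff n ≠ 0) ∧
    LSetP α (β + α ^ n) = (fun m => m + 1) '' LSetP α β := by
  subst hf
  have hatom : ∀ g : ℕ[X], pev α g = pev α f + α ^ n → g.coeff n ≠ 0 :=
    fun g => coeff_ne_zero_of_pev_eq_add_pow h1.le hint hn hbig
  exact ⟨hatom, LSetP_add_pow_eq_image hatom⟩

/-- For algebraic `α > 1` not an algebraic integer, any nonzero `β ∈ N₀[α]` and any `n`
larger than the degree of some representation of `β` with `α^(n+1) > α^n + β`: the atom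
`α^n` appears in every factorization of `β + α^n`, and `L(β + α^n) = 1 + L(β)`. -/
theorem stmt12 (α : ℝ) (h1 : 1 < α) (halg : IsAlgebraic ℚ α) (hint : ¬ IsIntegral ℤ α)
    (β : ℝ) (hβ : β ∈ Nmon α) (hβ0 : β ≠ 0)
    (f : Polynomial ℕ) (hf : pev α f = β) (n : ℕ) (hn : f.natDegree < n)
    (hbig : α ^ n + β < α ^ (n + 1)) :
    (∀ g : Polynomial ℕ, pev α g = β + α ^ n → g.coeff n ≠ 0) ∧
    LSetP α (β + α ^ n) = (fun m => m + 1) '' LSetP α β :=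
  stmt12_general α h1 hint β f hf n hn hbig
end

section
/- Let q = a/b with a, b coprime positive integers, b ≥ 2 and a > b (so q ∈ ℚ_{>1} \ ℕ). In the monoid N₀[q], any minimum-length factorization of the element aᵏ uses only atoms qⁱ with i ≥ k; moreover it can be written as ∑_{i=k}^{m} n_i qⁱ with all coefficients n_i ∈ {0, 1, …, a−1}. -/
open Polynomial

/-- `N₀[q]`: the additive submonoid of ℚ generated by the powers of `q`. -/
def NmonQ (q : ℚ) : AddSubmonoid ℚ := AddSubmonoid.closure (Set.range fun n : ℕ => q ^ n)

/-- Evaluation of a polynomial with ℕ-coefficients at a rational number. -/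
def pevQ (q : ℚ) (f : Polynomial ℕ) : ℚ := Polynomial.eval₂ (Nat.castRingHom ℚ) q f

/-- Lengths of factorizations of `x` in `N₀[q]` (representations `x = ∑ nᵢ qⁱ`). -/
def LSetQ (q : ℚ) (x : ℚ) : Set ℕ :=
  {n | ∃ f : Polynomial ℕ, pevQ q f = x ∧ f.eval 1 = n}

/-!
If a coefficient `nⱼ` of a factorization reached `a`, trading `a · qʲ` for `b · qʲ⁺¹` would
give a shorter factorization, so a minimum-length factorization has all coefficients `< a`.
Multiplying `∑ nₜ qᵗ = aᵏ` by `bᵐ` gives the integer identity `aᵏ bᵐ = ∑ nₜ aᵗ bᵐ⁻ᵗ`; if `nₜ = 0`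
for `t < i < k`, reducing it modulo `aⁱ⁺¹` shows `a ∣ nᵢ bᵐ⁻ⁱ`, hence `a ∣ nᵢ` by coprimality,
hence `nᵢ = 0`.
-/

theorem pevQ_add (q : ℚ) (f g : ℕ[X]) : pevQ q (f + g) = pevQ q f + pevQ q g :=
  eval₂_add _ _

theorem pevQ_monomial (q : ℚ) (n c : ℕ) : pevQ q (monomial n c) = c * q ^ n :=
  eval₂_monomial _ _

theorem pevQ_monomial_succ {q : ℚ} {a b : ℕ} (hbq : (b : ℚ) * q = a) (j : ℕ) :
    pevQ q (monomial (j + 1) b) = pevQ q (monomial j a) := by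
  rw [pevQ_monomial, pevQ_monomial, ← hbq, pow_succ]
  ring

theorem exists_eq_add_monomial_of_le_coeff {f : ℕ[X]} {j c : ℕ} (h : c ≤ f.coeff j) :
    ∃ g : ℕ[X], f = g + monomial j c := by
  refine ⟨f.update j (f.coeff j - c), ?_⟩
  ext n
  rw [coeff_add, coeff_update_apply, coeff_monomial]
  split_ifs <;> subst_vars <;> omega

theorem coeff_lt_of_isLeast_length {q : ℚ} {a b : ℕ} (hbq : (b : ℚ) * q = a) (hba : b < a)
    {x : ℚ} {f : ℕ[X]} (hf : pevQ q f = x) (hmin : IsLeast (LSetQ q x) (f.eval 1)) (j : ℕ) :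
    f.coeff j < a := by
  by_contra! h
  obtain ⟨g, rfl⟩ := exists_eq_add_monomial_of_le_coeff h
  have hshorter := hmin.2 ⟨g + monomial (j + 1) b,
    by rw [← hf, pevQ_add, pevQ_add, pevQ_monomial_succ hbq], rfl⟩
  simp only [eval_add, eval_monomial, one_pow, mul_one] at hshorter
  omega

theorem pevQ_div_mul_pow_eq_sum {a b : ℕ} (hb : b ≠ 0) {f : ℕ[X]} {m : ℕ}
    (hm : f.natDegree ≤ m) :
    pevQ (a / b) f * b ^ m =
      ((∑ t ∈ Finset.range (m + 1), f.coeff t * a ^ t * b ^ (m - t) : ℕ) : ℚ) := by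
  rw [pevQ, eval₂_eq_sum_range' _ (Nat.lt_succ_of_le hm), Finset.sum_mul]
  push_cast
  refine Finset.sum_congr rfl fun t ht => ?_
  have hbm : (b : ℚ) ^ m = b ^ t * b ^ (m - t) := by
    rw [← pow_add, Nat.add_sub_cancel' (Nat.lt_succ_iff.mp (Finset.mem_range.mp ht))]
  rw [hbm, div_pow]
  field_simp

theorem dvd_of_pow_mul_pow_eq_sum {a b k m i : ℕ} {c : ℕ → ℕ} (hab : a.Coprime b) (ha : a ≠ 0)
    (hsum : a ^ k * b ^ m = ∑ t ∈ Finset.range (m + 1), c t * a ^ t * b ^ (m - t))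
    (hik : i < k) (him : i ≤ m) (hzero : ∀ t < i, c t = 0) : a ∣ c i := by
  have hrest :
      a ^ (i + 1) ∣ ∑ t ∈ (Finset.range (m + 1)).erase i, c t * a ^ t * b ^ (m - t) := by
    refine Finset.dvd_sum fun t ht => ?_
    rcases lt_or_gt_of_ne (Finset.ne_of_mem_erase ht) with hlt | hgt
    · simp [hzero t hlt]
    · exact ((pow_dvd_pow a hgt).mul_left _).mul_right _
  have hterm : a ^ (i + 1) ∣ c i * a ^ i * b ^ (m - i) := by
    have htotal : a ^ (i + 1) ∣ a ^ k * b ^ m := (pow_dvd_pow a hik).mul_right _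
    rwa [hsum, ← Finset.add_sum_erase _ _ (Finset.mem_range.mpr (Nat.lt_succ_of_le him)),
      Nat.dvd_add_left hrest] at htotal
  rw [pow_succ, show c i * a ^ i * b ^ (m - i) = a ^ i * (c i * b ^ (m - i)) by ring,
    Nat.mul_dvd_mul_iff_left (pow_pos (Nat.pos_of_ne_zero ha) i)] at hterm
  exact (hab.pow_right (m - i)).dvd_of_dvd_mul_right hterm

/-- For `q = a/b` with `gcd(a,b) = 1`, `b ≥ 2`, `a > b`, any minimum-length factorization
`f` of `aᵏ` in `N₀[q]` uses only atoms `qⁱ` with `i ≥ k`, and all its coefficients lie in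
`{0, 1, …, a − 1}`. -/
theorem stmt15 (a b : ℕ) (hab : Nat.Coprime a b) (hb : 2 ≤ b) (hba : b < a)
    (q : ℚ) (hq : q = (a : ℚ) / (b : ℚ)) (k : ℕ)
    (f : Polynomial ℕ) (hf : pevQ q f = (a : ℚ) ^ k)
    (hmin : IsLeast (LSetQ q ((a : ℚ) ^ k)) (f.eval 1)) :
    (∀ i : ℕ, i < k → f.coeff i = 0) ∧ (∀ i : ℕ, f.coeff i ≤ a - 1) := by
  have hb0 : b ≠ 0 := by omega
  have hbq : (b : ℚ) * q = a := by rw [hq]; field_simp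
  have hlt := coeff_lt_of_isLeast_length hbq hba hf hmin
  set m := f.natDegree + k
  have hsum : a ^ k * b ^ m = ∑ t ∈ Finset.range (m + 1), f.coeff t * a ^ t * b ^ (m - t) := by
    have h := pevQ_div_mul_pow_eq_sum (a := a) hb0 (f := f) (m := m) (by omega)
    rw [← hq, hf] at h
    exact_mod_cast h
  refine ⟨fun i => ?_, fun i => Nat.le_sub_one_of_lt (hlt i)⟩
  induction i using Nat.strong_induction_on with
  | _ i ih =>
    intro hik
    exact Nat.eq_zero_of_dvd_of_lt (dvd_of_pow_mul_pow_eq_sum hab (by omega) hsum hik (by omega)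
      fun t ht => ih t ht (ht.trans hik)) (hlt i)
end
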